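/- arXiv:1106.4733 — 5 statements merged into one kernel-verified Lean document; each statement's English description precedes it below -/
import Mathlib

section
/- Let L be an even positive definite lattice and let ν : H(L) → ℂ* be a group homomorphism of finite order which is invariant with respect to the SL₂(ℤ)-action, i.e. ν(A·h) = ν(h) for all A ∈ SL₂(ℤ) and h ∈ H(L). Then there exists t ∈ ℚ with t·s(L) ∈ ℤ such that ν([x,y;r]) = exp(πi t((x,x)+(y,y)−(x,y)+2r)) for all [x,y;r] ∈ H(L). Moreover the restriction of ν to H_s(L) takes values in {±1}, and this restriction is trivial if t·n(L) ∈ 2ℤ. -/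
open scoped BigOperators Classical

noncomputable section

/-- The integral bilinear form attached to a Gram matrix `S`. -/
def bilinZ {ι : Type*} [Fintype ι] (S : Matrix ι ι ℤ) (x y : ι → ℤ) : ℤ :=
  ∑ i, ∑ j, x i * S i j * y j

def bilinQ {ι : Type*} [Fintype ι] (S : Matrix ι ι ℤ) (x y : ι → ℚ) : ℚ :=
  ∑ i, ∑ j, x i * (S i j : ℚ) * y j

/-- `S` is the Gram matrix of an even positive definite lattice. -/
structure IsEvenPosDef {ι : Type*} [Fintype ι] (S : Matrix ι ι ℤ) : Prop where
  symm : S.IsSymm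
  posdef : ∀ x : ι → ℚ, x ≠ 0 → 0 < bilinQ S x x
  even_diag : ∀ i, (2 : ℤ) ∣ S i i

section bilin
variable {ι : Type*} [Fintype ι] (S : Matrix ι ι ℤ)

@[simp] lemma bilinZ_add_left (x x' y : ι → ℤ) :
    bilinZ S (x + x') y = bilinZ S x y + bilinZ S x' y := by
  simp [bilinZ, add_mul, Finset.sum_add_distrib]

@[simp] lemma bilinZ_add_right (x y y' : ι → ℤ) :
    bilinZ S x (y + y') = bilinZ S x y + bilinZ S x y' := by
  simp [bilinZ, mul_add, Finset.sum_add_distrib]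

@[simp] lemma bilinZ_neg_left (x y : ι → ℤ) : bilinZ S (-x) y = -bilinZ S x y := by
  simp [bilinZ, Finset.sum_neg_distrib]

@[simp] lemma bilinZ_neg_right (x y : ι → ℤ) : bilinZ S x (-y) = -bilinZ S x y := by
  simp [bilinZ, Finset.sum_neg_distrib]

@[simp] lemma bilinZ_zero_left (y : ι → ℤ) : bilinZ S 0 y = 0 := by simp [bilinZ]

@[simp] lemma bilinZ_zero_right (x : ι → ℤ) : bilinZ S x 0 = 0 := by simp [bilinZ]

end bilin

/-- The ambient Heisenberg-type group: symbols `[x,y;r]` with `x, y` lattice vectors and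
`r ∈ ℚ`, with the group law of the Heisenberg group. -/
@[ext] structure HeisAmb (ι : Type*) [Fintype ι] (S : Matrix ι ι ℤ) where
  x : ι → ℤ
  y : ι → ℤ
  r : ℚ

namespace HeisAmb

variable {ι : Type*} [Fintype ι] {S : Matrix ι ι ℤ}

instance : Mul (HeisAmb ι S) :=
  ⟨fun g h => ⟨g.x + h.x, g.y + h.y,
    g.r + h.r + ((bilinZ S g.x h.y - bilinZ S h.x g.y : ℤ) : ℚ) / 2⟩⟩

instance : One (HeisAmb ι S) := ⟨⟨0, 0, 0⟩⟩

instance : Inv (HeisAmb ι S) := ⟨fun g => ⟨-g.x, -g.y, -g.r⟩⟩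

@[simp] lemma mul_x (g h : HeisAmb ι S) : (g * h).x = g.x + h.x := rfl
@[simp] lemma mul_y (g h : HeisAmb ι S) : (g * h).y = g.y + h.y := rfl
@[simp] lemma mul_r (g h : HeisAmb ι S) :
    (g * h).r = g.r + h.r + ((bilinZ S g.x h.y - bilinZ S h.x g.y : ℤ) : ℚ) / 2 := rfl
@[simp] lemma one_x : (1 : HeisAmb ι S).x = 0 := rfl
@[simp] lemma one_y : (1 : HeisAmb ι S).y = 0 := rfl
@[simp] lemma one_r : (1 : HeisAmb ι S).r = 0 := rfl
@[simp] lemma inv_x (g : HeisAmb ι S) : g⁻¹.x = -g.x := rfl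
@[simp] lemma inv_y (g : HeisAmb ι S) : g⁻¹.y = -g.y := rfl
@[simp] lemma inv_r (g : HeisAmb ι S) : g⁻¹.r = -g.r := rfl

instance : Group (HeisAmb ι S) where
  mul_assoc a b c := by
    ext <;> simp only [mul_x, mul_y, mul_r, bilinZ_add_left, bilinZ_add_right]
    · rw [add_assoc]
    · rw [add_assoc]
    · push_cast; ring
  one_mul g := by ext <;> simp
  mul_one g := by ext <;> simp
  inv_mul_cancel g := by ext <;> simp

end HeisAmb

/-- The integral Heisenberg group `H(L)`: the elements `[x,y;r]` with
`r + (x,y)/2 ∈ ℤ`. -/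
def HeisL {ι : Type*} [Fintype ι] (S : Matrix ι ι ℤ) : Subgroup (HeisAmb ι S) where
  carrier := {g | ∃ m : ℤ, g.r + ((bilinZ S g.x g.y : ℤ) : ℚ) / 2 = m}
  mul_mem' := by
    rintro g h ⟨m₁, h₁⟩ ⟨m₂, h₂⟩
    refine ⟨m₁ + m₂ + bilinZ S g.x h.y, ?_⟩
    simp only [HeisAmb.mul_x, HeisAmb.mul_y, HeisAmb.mul_r,
      bilinZ_add_left, bilinZ_add_right]
    push_cast at h₁ h₂ ⊢
    linarith
  one_mem' := ⟨0, by simp⟩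
  inv_mem' := by
    rintro g ⟨m, h⟩
    refine ⟨-m + bilinZ S g.x g.y, ?_⟩
    simp only [HeisAmb.inv_x, HeisAmb.inv_y, HeisAmb.inv_r,
      bilinZ_neg_left, bilinZ_neg_right]
    push_cast at h ⊢
    linarith

/-- The minimal integral Heisenberg group `H_s(L)`, generated by the elements
`[x,0;0]` and `[0,y;0]`. -/
def HeisS {ι : Type*} [Fintype ι] (S : Matrix ι ι ℤ) : Subgroup (HeisAmb ι S) :=
  Subgroup.closure {g : HeisAmb ι S | (g.y = 0 ∧ g.r = 0) ∨ (g.x = 0 ∧ g.r = 0)}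

abbrev SL2Z := Matrix.SpecialLinearGroup (Fin 2) ℤ

/-- The action of `A = (a,b;c,d) ∈ SL₂(ℤ)` on the Heisenberg group:
`A·[x,y;r] = [dx−cy, −bx+ay; r]`. -/
def slAct {ι : Type*} [Fintype ι] (S : Matrix ι ι ℤ) (A : SL2Z) (g : HeisAmb ι S) :
    HeisAmb ι S :=
  ⟨fun i => A.1 1 1 * g.x i - A.1 1 0 * g.y i,
   fun i => -A.1 0 1 * g.x i + A.1 0 0 * g.y i, g.r⟩

/-!
In `H(L)` the symbols `[0,0;m]` are central and `[x,0;0]`, `[0,y;0]` have commutator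
`[0,0;(x,y)]`, so `ε := ν[0,0;1]` satisfies `ε^(x,y) = 1`, and
`[x,y;r] = [x,0;0] [0,y;0] [0,0;r-(x,y)/2]` reduces `ν` to its values on the two kinds of
generators and on `ε`. The matrix `(0,-1;1,0)` moves `[x,0;0]` to `[0,x;0]`, and `(1,-1;0,1)`
moves it to `[x,x;0] = [x,0;0] [0,x;0] [0,0;-(x,x)/2]`, so invariance forces
`ν[x,0;0] = ν[0,x;0] = ε^((x,x)/2)` and hence `ν[x,y;r] = ε^(((x,x)+(y,y)-(x,y)+2r)/2)`.
Writing the root of unity `ε` as `exp(2πit)` gives the formula; `t·s(L) ∈ ℤ` because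
`ε^(x,y) = 1`, and on the generators of `H_s(L)` the values `ε^((x,x)/2)` square to `1`.
-/

section BilinZ

variable {ι : Type*} [Fintype ι] {S : Matrix ι ι ℤ}

lemma bilinZ_comm (hS : S.IsSymm) (x y : ι → ℤ) : bilinZ S x y = bilinZ S y x := by
  rw [bilinZ, bilinZ, Finset.sum_comm]
  refine Finset.sum_congr rfl fun j _ => Finset.sum_congr rfl fun i _ => ?_
  rw [hS.apply]
  ring

lemma bilinZ_single_single [DecidableEq ι] (i j : ι) (a b : ℤ) :
    bilinZ S (Pi.single i a) (Pi.single j b) = a * S i j * b := by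
  simp [bilinZ, Pi.single_apply]

lemma two_dvd_bilinZ_self (hS : S.IsSymm) (hd : ∀ i, (2 : ℤ) ∣ S i i) (x : ι → ℤ) :
    2 ∣ bilinZ S x x := by
  classical
  rw [← Finset.univ_sum_single x]
  induction (Finset.univ : Finset ι) using Finset.induction_on with
  | empty => simp
  | insert i s hi ih =>
    rw [Finset.sum_insert hi, bilinZ_add_left, bilinZ_add_right, bilinZ_add_right,
      bilinZ_comm hS (∑ j ∈ s, _), bilinZ_single_single]
    have hii : 2 ∣ x i * S i i * x i := by
      rw [mul_right_comm]
      exact (hd i).mul_left _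
    omega

end BilinZ

lemma zpow_eq_one_of_mem_span {G : Type*} [Group G] {a : G} {T : Set ℤ}
    (h : ∀ z ∈ T, a ^ z = 1) {s : ℤ} (hs : s ∈ Ideal.span T) : a ^ s = 1 := by
  have hle : Ideal.span T ≤ Ideal.span {(orderOf a : ℤ)} :=
    Ideal.span_le.2 fun z hz =>
      Ideal.mem_span_singleton.2 (orderOf_dvd_iff_zpow_eq_one.2 (h z hz))
  exact orderOf_dvd_iff_zpow_eq_one.1 (Ideal.mem_span_singleton.1 (hle hs))

section RootsOfUnity

open Complex

lemma exists_rat_eq_exp_of_pow_eq_one {ζ : ℂˣ} {N : ℕ} (hN : 0 < N) (h : ζ ^ N = 1) :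
    ∃ t : ℚ, (ζ : ℂ) = exp (2 * Real.pi * I * t) := by
  have : NeZero N := ⟨hN.ne'⟩
  obtain ⟨i, -, hi⟩ := (Complex.mem_rootsOfUnity N ζ).1 ((_root_.mem_rootsOfUnity N ζ).2 h)
  exact ⟨i / N, by rw [← hi]; push_cast; rfl⟩

lemma val_zpow_eq_exp {ζ : ℂˣ} {t : ℚ} (h : (ζ : ℂ) = exp (2 * Real.pi * I * t)) (z : ℤ) :
    ((ζ ^ z : ℂˣ) : ℂ) = exp (2 * Real.pi * I * ((t * z : ℚ) : ℂ)) := by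
  rw [Units.val_zpow_eq_zpow_val, h, ← exp_int_mul]
  push_cast
  congr 1
  ring

lemma exp_two_pi_I_mul_ratCast_eq_one_iff (t : ℚ) :
    exp (2 * Real.pi * I * t) = 1 ↔ ∃ m : ℤ, t = m := by
  rw [exp_eq_one_iff]
  refine exists_congr fun m => ?_
  rw [mul_comm (m : ℂ), mul_right_inj' two_pi_I_ne_zero]
  norm_cast

end RootsOfUnity

namespace HeisL

open scoped commutatorElement

variable {ι : Type*} [Fintype ι] {S : Matrix ι ι ℤ}

def ofX (x : ι → ℤ) : HeisL S := ⟨⟨x, 0, 0⟩, 0, by simp⟩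

def ofY (y : ι → ℤ) : HeisL S := ⟨⟨0, y, 0⟩, 0, by simp⟩

def center (m : ℤ) : HeisL S := ⟨⟨0, 0, m⟩, m, by simp⟩

lemma center_add (a b : ℤ) : (center (a + b) : HeisL S) = center a * center b := by
  ext <;> simp [center]

lemma center_eq_zpow (m : ℤ) : (center m : HeisL S) = center 1 ^ m := by
  induction m using Int.induction_on with
  | zero => rfl
  | succ k ih => rw [center_add, ih, zpow_add_one]
  | pred k ih => rw [zpow_sub_one, ← ih, eq_mul_inv_iff_mul_eq, ← center_add, sub_add_cancel]

lemma commutatorElement_ofX_ofY (x y : ι → ℤ) :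
    ⁅(ofX x : HeisL S), (ofY y : HeisL S)⁆ = center (bilinZ S x y) := by
  ext <;> simp [commutatorElement_def, ofX, ofY, center]

lemma eq_ofX_mul_ofY_mul_center (g : HeisL S) (m : ℤ)
    (hm : g.1.r + (bilinZ S g.1.x g.1.y : ℚ) / 2 = m) :
    g = ofX g.1.x * ofY g.1.y * center (m - bilinZ S g.1.x g.1.y) := by
  ext <;> simp [ofX, ofY, center]
  linarith

lemma slAct_S_mk (x : ι → ℤ) : slAct S ModularGroup.S ⟨x, 0, 0⟩ = ⟨0, x, 0⟩ := by
  ext <;> simp [slAct, ModularGroup.coe_S]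

lemma slAct_T_inv_mk (x : ι → ℤ) : slAct S ModularGroup.T⁻¹ ⟨x, 0, 0⟩ = ⟨x, x, 0⟩ := by
  ext <;> simp [slAct]

lemma map_eq_one_of_mem_heisS {G : Type*} [Group G] (φ : HeisL S →* G)
    (hx : ∀ x, φ (ofX x) = 1) (hy : ∀ y, φ (ofY y) = 1) {g : HeisAmb ι S}
    (hg : g ∈ HeisL S) (hgS : g ∈ HeisS S) : φ ⟨g, hg⟩ = 1 := by
  have hle : HeisS S ≤ φ.ker.map (HeisL S).subtype := by
    rw [HeisS, Subgroup.closure_le]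
    rintro ⟨x, y, r⟩ (⟨rfl, rfl⟩ | ⟨rfl, rfl⟩)
    · exact ⟨ofX x, hx x, rfl⟩
    · exact ⟨ofY y, hy y, rfl⟩
  obtain ⟨g', hg', rfl⟩ := hle hgS
  exact hg'

section Character

variable {G : Type*} [CommGroup G] (ν : HeisL S →* G)

lemma zpow_bilinZ_eq_one (x y : ι → ℤ) : ν (center 1) ^ bilinZ S x y = 1 := by
  rw [← map_zpow, ← center_eq_zpow, ← commutatorElement_ofX_ofY, map_commutatorElement,
    commutatorElement_eq_one_iff_mul_comm, mul_comm]

lemma apply_eq_mul_zpow (g : HeisL S) (m : ℤ)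
    (hm : g.1.r + (bilinZ S g.1.x g.1.y : ℚ) / 2 = m) :
    ν g = ν (ofX g.1.x) * ν (ofY g.1.y) * ν (center 1) ^ (m - bilinZ S g.1.x g.1.y) := by
  conv_lhs => rw [eq_ofX_mul_ofY_mul_center g m hm]
  rw [map_mul, map_mul, center_eq_zpow, map_zpow]

def IsSLInvariant : Prop :=
  ∀ (A : SL2Z) (g : HeisAmb ι S) (hg : g ∈ HeisL S) (hg' : slAct S A g ∈ HeisL S),
    ν ⟨slAct S A g, hg'⟩ = ν ⟨g, hg⟩

variable {ν}

lemma IsSLInvariant.apply_eq {A : SL2Z} {g g' : HeisAmb ι S} (h : IsSLInvariant ν)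
    (hg : g ∈ HeisL S) (hg' : g' ∈ HeisL S) (e : slAct S A g = g') :
    ν ⟨g', hg'⟩ = ν ⟨g, hg⟩ := by
  subst e
  exact h A g hg hg'

lemma IsSLInvariant.apply_ofY_eq_apply_ofX (h : IsSLInvariant ν) (x : ι → ℤ) :
    ν (ofY x) = ν (ofX x) :=
  h.apply_eq (ofX x).2 (ofY x).2 (slAct_S_mk x)

lemma IsSLInvariant.apply_ofY {y : ι → ℤ} {q : ℤ} (h : IsSLInvariant ν)
    (hq : bilinZ S y y = 2 * q) : ν (ofY y) = ν (center 1) ^ q := by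
  have hmem : (⟨y, y, 0⟩ : HeisAmb ι S) ∈ HeisL S := ⟨q, by simp [hq]⟩
  have hT := h.apply_eq (ofX y).2 hmem (slAct_T_inv_mk y)
  rw [apply_eq_mul_zpow ν _ q (by simp [hq])] at hT
  dsimp only at hT
  rw [hq, show q - 2 * q = -q by ring, mul_assoc, mul_eq_left, mul_eq_one_iff_eq_inv,
    zpow_neg, inv_inv] at hT
  exact hT

lemma IsSLInvariant.apply_ofY_sq (h : IsSLInvariant ν) (hS : S.IsSymm)
    (hd : ∀ i, (2 : ℤ) ∣ S i i) (y : ι → ℤ) : ν (ofY y) ^ 2 = 1 := by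
  obtain ⟨q, hq⟩ := two_dvd_bilinZ_self hS hd y
  rw [h.apply_ofY hq, ← zpow_natCast, ← zpow_mul, mul_comm, Nat.cast_ofNat, ← hq,
    zpow_bilinZ_eq_one]

lemma IsSLInvariant.sq_apply_eq_one_of_mem_heisS (h : IsSLInvariant ν) (hS : S.IsSymm)
    (hd : ∀ i, (2 : ℤ) ∣ S i i) {g : HeisAmb ι S} (hg : g ∈ HeisL S) (hgS : g ∈ HeisS S) :
    ν ⟨g, hg⟩ ^ 2 = 1 :=
  map_eq_one_of_mem_heisS ((powMonoidHom 2).comp ν)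
    (fun x => by simpa [← h.apply_ofY_eq_apply_ofX] using h.apply_ofY_sq hS hd x)
    (h.apply_ofY_sq hS hd) hg hgS

lemma IsSLInvariant.exists_apply_eq_zpow (h : IsSLInvariant ν) (hS : S.IsSymm)
    (hd : ∀ i, (2 : ℤ) ∣ S i i) (g : HeisL S) :
    ∃ n : ℤ, (2 * n : ℚ) = ((bilinZ S g.1.x g.1.x + bilinZ S g.1.y g.1.y
        - bilinZ S g.1.x g.1.y : ℤ) : ℚ) + 2 * g.1.r ∧ ν g = ν (center 1) ^ n := by
  obtain ⟨qx, hqx⟩ := two_dvd_bilinZ_self hS hd g.1.x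
  obtain ⟨qy, hqy⟩ := two_dvd_bilinZ_self hS hd g.1.y
  obtain ⟨m, hm⟩ := g.2
  refine ⟨qx + qy + m - bilinZ S g.1.x g.1.y, ?_, ?_⟩
  · push_cast [hqx, hqy]
    linarith
  · rw [apply_eq_mul_zpow ν g m hm, ← h.apply_ofY_eq_apply_ofX, h.apply_ofY hqx,
      h.apply_ofY hqy, ← zpow_add, ← zpow_add]
    congr 1
    ring

end Character

section ComplexCharacter

open Complex

variable {ν : HeisL S →* ℂˣ} {t : ℚ}

lemma IsSLInvariant.apply_eq_exp (h : IsSLInvariant ν) (hS : S.IsSymm)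
    (hd : ∀ i, (2 : ℤ) ∣ S i i) (ht : (ν (center 1) : ℂ) = exp (2 * Real.pi * I * t))
    (g : HeisAmb ι S) (hg : g ∈ HeisL S) :
    (ν ⟨g, hg⟩ : ℂ) = exp (Real.pi * I * t *
      (((bilinZ S g.x g.x + bilinZ S g.y g.y - bilinZ S g.x g.y : ℤ) : ℂ) + 2 * (g.r : ℂ))) := by
  obtain ⟨n, hn, hgn⟩ := h.exists_apply_eq_zpow hS hd ⟨g, hg⟩
  have hn' : (2 * n : ℂ) = ((bilinZ S g.x g.x + bilinZ S g.y g.y - bilinZ S g.x g.y : ℤ) : ℂ)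
      + 2 * (g.r : ℂ) := by exact_mod_cast hn
  rw [hgn, val_zpow_eq_exp ht]
  congr 1
  push_cast at hn' ⊢
  linear_combination (Real.pi : ℂ) * I * t * hn'

lemma IsSLInvariant.apply_eq_one_of_mem_heisS (h : IsSLInvariant ν) (hS : S.IsSymm)
    (hd : ∀ i, (2 : ℤ) ∣ S i i) (ht : (ν (center 1) : ℂ) = exp (2 * Real.pi * I * t))
    {n m : ℤ} (hn : ∀ y, n ∣ bilinZ S y y) (hm : t * n = 2 * m)
    {g : HeisAmb ι S} (hg : g ∈ HeisL S) (hgS : g ∈ HeisS S) : ν ⟨g, hg⟩ = 1 := by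
  have hgen (y : ι → ℤ) : ν (ofY y) = 1 := by
    obtain ⟨q, hq⟩ := two_dvd_bilinZ_self hS hd y
    obtain ⟨d, hqd⟩ : ∃ d : ℤ, 2 * q = n * d := hq ▸ hn y
    rw [h.apply_ofY hq, Units.ext_iff, val_zpow_eq_exp ht, Units.val_one,
      exp_two_pi_I_mul_ratCast_eq_one_iff]
    refine ⟨m * d, ?_⟩
    have hqd' : (2 * q : ℚ) = n * d := by exact_mod_cast hqd
    push_cast
    linear_combination (t * hqd' + d * hm) / 2
  exact map_eq_one_of_mem_heisS ν (fun x => h.apply_ofY_eq_apply_ofX x ▸ hgen x) hgen hg hgS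

end ComplexCharacter

end HeisL

theorem statement1_general {ι : Type*} [Fintype ι] (S : Matrix ι ι ℤ) (hS : IsEvenPosDef S)
    (s nL : ℤ)
    (hspan : Ideal.span {z : ℤ | ∃ x y : ι → ℤ, bilinZ S x y = z} = Ideal.span {s})
    (hnspan : Ideal.span {z : ℤ | ∃ x : ι → ℤ, bilinZ S x x = z} = Ideal.span {nL})
    (ν : (HeisL S) →* ℂˣ)
    (hfin : ∃ N : ℕ, 0 < N ∧ ∀ h, ν h ^ N = 1)
    (hinv : ∀ (A : SL2Z) (g : HeisAmb ι S) (hg : g ∈ HeisL S)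
      (hg' : slAct S A g ∈ HeisL S), ν ⟨slAct S A g, hg'⟩ = ν ⟨g, hg⟩) :
    ∃ t : ℚ, (∃ m : ℤ, t * (s : ℚ) = m) ∧
      (∀ (g : HeisAmb ι S) (hg : g ∈ HeisL S),
        (ν ⟨g, hg⟩ : ℂ) = Complex.exp ((Real.pi : ℂ) * Complex.I * (t : ℂ) *
          (((bilinZ S g.x g.x + bilinZ S g.y g.y - bilinZ S g.x g.y : ℤ) : ℂ)
            + 2 * (g.r : ℂ)))) ∧
      (∀ (g : HeisAmb ι S) (hg : g ∈ HeisL S), g ∈ HeisS S →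
        (ν ⟨g, hg⟩ : ℂ) = 1 ∨ (ν ⟨g, hg⟩ : ℂ) = -1) ∧
      ((∃ m : ℤ, t * (nL : ℚ) = 2 * m) →
        ∀ (g : HeisAmb ι S) (hg : g ∈ HeisL S), g ∈ HeisS S → (ν ⟨g, hg⟩ : ℂ) = 1) := by
  have hν : HeisL.IsSLInvariant ν := hinv
  obtain ⟨N, hN, hνN⟩ := hfin
  obtain ⟨t, ht⟩ := exists_rat_eq_exp_of_pow_eq_one hN (hνN (HeisL.center 1))
  refine ⟨t, ?_, hν.apply_eq_exp hS.symm hS.even_diag ht, ?_, ?_⟩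
  · have hs : s ∈ Ideal.span {z : ℤ | ∃ x y : ι → ℤ, bilinZ S x y = z} :=
      hspan ▸ Ideal.mem_span_singleton_self s
    have hεs : ν (HeisL.center 1) ^ s = 1 := by
      refine zpow_eq_one_of_mem_span ?_ hs
      rintro _ ⟨x, y, rfl⟩
      exact HeisL.zpow_bilinZ_eq_one ν x y
    rw [← exp_two_pi_I_mul_ratCast_eq_one_iff, ← val_zpow_eq_exp ht, hεs, Units.val_one]
  · intro g hg hgS
    rw [← sq_eq_one_iff, ← Units.val_pow_eq_pow_val,
      hν.sq_apply_eq_one_of_mem_heisS hS.symm hS.even_diag hg hgS, Units.val_one]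
  · rintro ⟨m, hm⟩ g hg hgS
    have hdvd (y : ι → ℤ) : nL ∣ bilinZ S y y := by
      rw [← Ideal.mem_span_singleton, ← hnspan]
      exact Ideal.subset_span ⟨y, rfl⟩
    rw [hν.apply_eq_one_of_mem_heisS hS.symm hS.even_diag ht hdvd hm hg hgS, Units.val_one]

/-- An `SL₂(ℤ)`-invariant finite-order character `ν : H(L) → ℂ*` is of the
form `ν([x,y;r]) = exp(πi t((x,x)+(y,y)−(x,y)+2r))` for some `t ∈ ℚ` with `t·s(L) ∈ ℤ`;
its restriction to `H_s(L)` takes values in `{±1}` and is trivial if `t·n(L) ∈ 2ℤ`. -/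
theorem statement1 {ι : Type*} [Fintype ι] (S : Matrix ι ι ℤ) (hS : IsEvenPosDef S)
    (s nL : ℤ) (hs : 0 ≤ s) (hn : 0 ≤ nL)
    (hspan : Ideal.span {z : ℤ | ∃ x y : ι → ℤ, bilinZ S x y = z} = Ideal.span {s})
    (hnspan : Ideal.span {z : ℤ | ∃ x : ι → ℤ, bilinZ S x x = z} = Ideal.span {nL})
    (ν : (HeisL S) →* ℂˣ)
    (hfin : ∃ N : ℕ, 0 < N ∧ ∀ h, ν h ^ N = 1)
    (hinv : ∀ (A : SL2Z) (g : HeisAmb ι S) (hg : g ∈ HeisL S)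
      (hg' : slAct S A g ∈ HeisL S), ν ⟨slAct S A g, hg'⟩ = ν ⟨g, hg⟩) :
    ∃ t : ℚ, (∃ m : ℤ, t * (s : ℚ) = m) ∧
      (∀ (g : HeisAmb ι S) (hg : g ∈ HeisL S),
        (ν ⟨g, hg⟩ : ℂ) = Complex.exp ((Real.pi : ℂ) * Complex.I * (t : ℂ) *
          (((bilinZ S g.x g.x + bilinZ S g.y g.y - bilinZ S g.x g.y : ℤ) : ℂ)
            + 2 * (g.r : ℂ)))) ∧
      (∀ (g : HeisAmb ι S) (hg : g ∈ HeisL S), g ∈ HeisS S →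
        (ν ⟨g, hg⟩ : ℂ) = 1 ∨ (ν ⟨g, hg⟩ : ℂ) = -1) ∧
      ((∃ m : ℤ, t * (nL : ℚ) = 2 * m) →
        ∀ (g : HeisAmb ι S) (hg : g ∈ HeisL S), g ∈ HeisS S → (ν ⟨g, hg⟩ : ℂ) = 1) :=
  statement1_general S hS s nL hspan hnspan ν hfin hinv
end
end

section
/- Let φ ∈ J_{k,L;t}(χ₁ × ν) be a holomorphic Jacobi form of weight k and index t > 0 for an even positive definite lattice L, with finite-order SL₂(ℤ)-character (or multiplier system) χ₁ and Heisenberg character ν. If φ is not identically zero, then t·(x,y) ∈ ℤ for all x,y ∈ L (equivalently t·s(L) ∈ ℤ, where s(L) is the scale of L), and the Heisenberg character is uniquely determined by t: ν([x,y;(1/2)(x,y)]) = exp(πi t((x,x)+(y,y))) for all x,y ∈ L. -/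
open Complex Matrix
open scoped Real BigOperators Classical

noncomputable section

def bilinR {ι : Type*} [Fintype ι] (S : Matrix ι ι ℤ) (x y : ι → ℝ) : ℝ :=
  ∑ i, ∑ j, x i * (S i j : ℝ) * y j

def bilinC {ι : Type*} [Fintype ι] (S : Matrix ι ι ℤ) (x y : ι → ℂ) : ℂ :=
  ∑ i, ∑ j, x i * (S i j : ℂ) * y j

/-- `l ∈ (1/2) L^∨`, written in lattice coordinates:  `2(l,x) ∈ ℤ` for every lattice vector. -/
def InHalfDual {ι : Type*} [Fintype ι] (S : Matrix ι ι ℤ) (l : ι → ℚ) : Prop :=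
  ∀ x : ι → ℤ, ∃ m : ℤ, 2 * bilinQ S l (fun i => (x i : ℚ)) = m

/-- `φ` is a holomorphic Jacobi form of weight `k` and index `t` for the lattice `(ℤ^ι, S)`
with `SL₂(ℤ)`-character (multiplier system) `χ`, Heisenberg character `ν`,
and Fourier coefficients `f`. -/
structure IsJacobiForm {ι : Type*} [Fintype ι] (S : Matrix ι ι ℤ) (k t : ℚ)
    (χ : SL2Z → ℂ) (ν : (ι → ℤ) → (ι → ℤ) → ℂ)
    (f : ℚ × (ι → ℚ) → ℂ) (φ : ℂ → (ι → ℂ) → ℂ) : Prop where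
  holo : DifferentiableOn ℂ (fun p : ℂ × (ι → ℂ) => φ p.1 p.2) {p | 0 < p.1.im}
  modular : ∀ A : SL2Z, ∀ τ : ℂ, 0 < τ.im → ∀ z : ι → ℂ,
    φ (((A.1 0 0 : ℂ) * τ + (A.1 0 1 : ℂ)) / ((A.1 1 0 : ℂ) * τ + (A.1 1 1 : ℂ)))
        (fun i => z i / ((A.1 1 0 : ℂ) * τ + (A.1 1 1 : ℂ)))
      = χ A * ((A.1 1 0 : ℂ) * τ + (A.1 1 1 : ℂ)) ^ (k : ℂ)
        * Complex.exp ((π : ℂ) * I * (t : ℂ) * (A.1 1 0 : ℂ) * bilinC S z z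
            / ((A.1 1 0 : ℂ) * τ + (A.1 1 1 : ℂ)))
        * φ τ z
  elliptic : ∀ x y : ι → ℤ, ∀ τ : ℂ, 0 < τ.im → ∀ z : ι → ℂ,
    φ τ (fun i => z i + (x i : ℂ) * τ + (y i : ℂ))
      = ν x y * Complex.exp (-((π : ℂ) * I * (t : ℂ))
            * ((bilinZ S x x : ℂ) * τ + 2 * bilinC S (fun i => (x i : ℂ)) z))
        * φ τ z
  support : ∀ p : ℚ × (ι → ℚ), f p ≠ 0 →
    0 ≤ p.1 ∧ InHalfDual S p.2 ∧ 0 ≤ 2 * p.1 * t - bilinQ S p.2 p.2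
  expansion : ∀ τ : ℂ, 0 < τ.im → ∀ z : ι → ℂ,
    HasSum (fun p : ℚ × (ι → ℚ) =>
        f p * Complex.exp (2 * (π : ℂ) * I *
          ((p.1 : ℂ) * τ + bilinC S (fun i => (p.2 i : ℂ)) z))) (φ τ z)

/-- The Fourier coefficients `f` are supported on indices of positive hyperbolic norm
(cusp form condition). -/
def IsCuspSupport {ι : Type*} [Fintype ι] (S : Matrix ι ι ℤ) (t : ℚ)
    (f : ℚ × (ι → ℚ) → ℂ) : Prop :=
  ∀ p : ℚ × (ι → ℚ), f p ≠ 0 → 0 < 2 * p.1 * t - bilinQ S p.2 p.2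

/-- `c` is a root of unity. -/
def HasFiniteOrder (c : ℂ) : Prop := ∃ N : ℕ, 0 < N ∧ c ^ N = 1

/-!
Evaluate the transformation laws at a point where `φ` does not vanish, and write
`e(w) = exp (2πiw)`. Translating `z` by `xτ + y` in the two possible orders gives
`ν(x, y) = ν(0, y) ν(x, 0)` and `e(t (x, y)) = 1`, which is the integrality. The elliptic laws
at `τ` and at `τ + 1`, related by the `T`-transformation, give `ν(0, x) = e(-t (x, x) / 2)`;
conjugating by `S`, which exchanges the roles of `x` and `y`, gives `ν(-y, 0) = ν(0, y)`.
Integrality of `t (x, x)` finally lets one flip the sign of the exponent.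
-/

section

variable {ι : Type*} [Fintype ι]

lemma bilinC_add_left (S : Matrix ι ι ℤ) (a b c : ι → ℂ) :
    bilinC S (fun i => a i + b i) c = bilinC S a c + bilinC S b c := by
  simp only [bilinC, add_mul, Finset.sum_add_distrib]

lemma bilinC_add_right (S : Matrix ι ι ℤ) (a b c : ι → ℂ) :
    bilinC S a (fun i => b i + c i) = bilinC S a b + bilinC S a c := by
  simp only [bilinC, mul_add, Finset.sum_add_distrib]

lemma bilinC_neg_left (S : Matrix ι ι ℤ) (a c : ι → ℂ) :
    bilinC S (fun i => -a i) c = -bilinC S a c := by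
  simp [bilinC]

lemma bilinC_div_right (S : Matrix ι ι ℤ) (a c : ι → ℂ) (r : ℂ) :
    bilinC S a (fun i => c i / r) = bilinC S a c / r := by
  simp only [bilinC, div_eq_mul_inv, Finset.sum_mul, mul_assoc]

lemma bilinC_comm {S : Matrix ι ι ℤ} (hS : S.IsSymm) (a b : ι → ℂ) :
    bilinC S a b = bilinC S b a := by
  rw [bilinC, Finset.sum_comm]
  refine Finset.sum_congr rfl fun j _ => Finset.sum_congr rfl fun i _ => ?_
  rw [← hS.apply i j]
  ring

lemma bilinC_intCast (S : Matrix ι ι ℤ) (x y : ι → ℤ) :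
    bilinC S (fun i => (x i : ℂ)) (fun i => (y i : ℂ)) = bilinZ S x y := by
  simp [bilinC, bilinZ]

lemma bilinZ_neg_neg (S : Matrix ι ι ℤ) (x : ι → ℤ) :
    bilinZ S (-x) (-x) = bilinZ S x x := by
  simp [bilinZ]

lemma HasFiniteOrder.ne_zero {c : ℂ} (hc : HasFiniteOrder c) : c ≠ 0 := by
  obtain ⟨N, hN, hcN⟩ := hc
  rintro rfl
  simp [zero_pow hN.ne'] at hcN

lemma exists_int_eq_of_exp_neg_two_pi_I_mul_eq_one {a : ℂ} (h : exp (-(2 * π * I * a)) = 1) :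
    ∃ m : ℤ, a = m := by
  obtain ⟨n, hn⟩ := exp_eq_one_iff.mp h
  refine ⟨-n, mul_left_cancel₀ two_pi_I_ne_zero ?_⟩
  push_cast
  linear_combination -hn

lemma exp_neg_pi_I_mul_of_eq_intCast {a : ℂ} {m : ℤ} (ha : a = m) :
    exp (-(π * I * a)) = exp (π * I * a) := by
  rw [← mul_one (exp (-(π * I * a))), ← exp_int_mul_two_pi_mul_I m, ← exp_add, ha]
  ring_nf

def ellipticFactor (S : Matrix ι ι ℤ) (t : ℚ) (τ : ℂ) (x : ι → ℤ) (z : ι → ℂ) :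
    ℂ :=
  exp (-(π * I * t) * (bilinZ S x x * τ + 2 * bilinC S (fun i => (x i : ℂ)) z))

section ellipticFactor

variable (S : Matrix ι ι ℤ) (t : ℚ) (τ : ℂ)

lemma ellipticFactor_ne_zero (x : ι → ℤ) (z : ι → ℂ) : ellipticFactor S t τ x z ≠ 0 :=
  exp_ne_zero _

lemma ellipticFactor_zero_left (z : ι → ℂ) : ellipticFactor S t τ 0 z = 1 := by
  simp [ellipticFactor, bilinZ, bilinC]

lemma ellipticFactor_add_intCast_right (x y : ι → ℤ) (z : ι → ℂ) :
    ellipticFactor S t τ x (fun i => z i + y i)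
      = exp (-(2 * π * I * (t * bilinZ S x y))) * ellipticFactor S t τ x z := by
  rw [ellipticFactor, ellipticFactor, ← exp_add, bilinC_add_right, bilinC_intCast]
  ring_nf

lemma ellipticFactor_add_one (x : ι → ℤ) (z : ι → ℂ) :
    ellipticFactor S t (τ + 1) x z
      = exp (-(π * I * t * bilinZ S x x)) * ellipticFactor S t τ x z := by
  rw [ellipticFactor, ellipticFactor, ← exp_add]
  ring_nf

/-- The elliptic factor at `-1/τ` matches the theta factor `e(t (z, z) / 2τ)` of the
`S`-transformation law. -/
lemma ellipticFactor_neg_inv_mul {S} (hS : S.IsSymm) (y : ι → ℤ) (z : ι → ℂ) :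
    ellipticFactor S t (-1 / τ) (-y) (fun i => z i / τ) * exp (π * I * t * bilinC S z z / τ)
      = exp (π * I * t * bilinC S (fun i => z i + y i) (fun i => z i + y i) / τ) := by
  have hneg : bilinC S (fun i => ((-y) i : ℂ)) (fun i => z i / τ)
      = -bilinC S (fun i => (y i : ℂ)) z / τ := by
    simp only [Pi.neg_apply, Int.cast_neg, bilinC_neg_left, bilinC_div_right, neg_div]
  rw [ellipticFactor, ← exp_add, hneg, bilinZ_neg_neg, bilinC_add_left, bilinC_add_right,
    bilinC_add_right, bilinC_intCast, bilinC_comm hS z (fun i => (y i : ℂ))]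
  ring_nf

end ellipticFactor

namespace IsJacobiForm

variable {S : Matrix ι ι ℤ} {k t : ℚ} {χ : SL2Z → ℂ} {ν : (ι → ℤ) → (ι → ℤ) → ℂ}
  {f : ℚ × (ι → ℚ) → ℂ} {φ : ℂ → (ι → ℂ) → ℂ} {τ : ℂ} {z : ι → ℂ}

lemma apply_add_period_add_lattice (hφ : IsJacobiForm S k t χ ν f φ) (hτ : 0 < τ.im)
    (x y : ι → ℤ) (z : ι → ℂ) :
    φ τ (fun i => z i + x i * τ + y i) = ν x y * ellipticFactor S t τ x z * φ τ z :=
  hφ.elliptic x y τ hτ z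

lemma apply_add_lattice (hφ : IsJacobiForm S k t χ ν f φ) (hτ : 0 < τ.im) (y : ι → ℤ)
    (z : ι → ℂ) : φ τ (fun i => z i + y i) = ν 0 y * φ τ z := by
  simpa [ellipticFactor_zero_left] using hφ.apply_add_period_add_lattice hτ 0 y z

lemma apply_add_period (hφ : IsJacobiForm S k t χ ν f φ) (hτ : 0 < τ.im) (x : ι → ℤ)
    (z : ι → ℂ) :
    φ τ (fun i => z i + x i * τ) = ν x 0 * ellipticFactor S t τ x z * φ τ z := by
  simpa using hφ.apply_add_period_add_lattice hτ x 0 z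

lemma apply_add_one (hφ : IsJacobiForm S k t χ ν f φ) (hτ : 0 < τ.im) (z : ι → ℂ) :
    φ (τ + 1) z = χ ModularGroup.T * φ τ z := by
  simpa [ModularGroup.coe_T] using hφ.modular ModularGroup.T τ hτ z

lemma apply_neg_inv (hφ : IsJacobiForm S k t χ ν f φ) (hτ : 0 < τ.im) (z : ι → ℂ) :
    φ (-1 / τ) (fun i => z i / τ)
      = χ ModularGroup.S * τ ^ (k : ℂ) * exp (π * I * t * bilinC S z z / τ) * φ τ z := by
  simpa [ModularGroup.coe_S] using hφ.modular ModularGroup.S τ hτ z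

/-- Translating by `xτ` and then by `y`. -/
lemma nu_eq_mul (hφ : IsJacobiForm S k t χ ν f φ) (hτ : 0 < τ.im) (hz : φ τ z ≠ 0)
    (x y : ι → ℤ) : ν x y = ν 0 y * ν x 0 := by
  have h := hφ.apply_add_period_add_lattice hτ x y z
  rw [hφ.apply_add_lattice hτ y, hφ.apply_add_period hτ x] at h
  exact mul_right_cancel₀ (mul_ne_zero (ellipticFactor_ne_zero S t τ x z) hz) (by
    linear_combination -h)

/-- Translating by `y` and then by `xτ` instead costs the factor `e(-t (x, y))`. -/
lemma exp_bilinZ_eq_one (hφ : IsJacobiForm S k t χ ν f φ) (hτ : 0 < τ.im) (hz : φ τ z ≠ 0)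
    {x y : ι → ℤ} (hxy : ν x y ≠ 0) : exp (-(2 * π * I * (t * bilinZ S x y))) = 1 := by
  have h := hφ.apply_add_period_add_lattice hτ x y z
  have h' := hφ.apply_add_period hτ x (fun i => z i + y i)
  rw [hφ.apply_add_lattice hτ y, ellipticFactor_add_intCast_right,
    show (fun i => z i + y i + x i * τ) = (fun i => z i + x i * τ + y i) by funext i; ring] at h'
  rw [hφ.nu_eq_mul hτ hz x y] at h
  refine mul_right_cancel₀
    (mul_ne_zero (mul_ne_zero hxy (ellipticFactor_ne_zero S t τ x z)) hz) ?_
  rw [hφ.nu_eq_mul hτ hz x y]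
  linear_combination h - h'

lemma exists_int_mul_bilinZ_eq (hφ : IsJacobiForm S k t χ ν f φ) (hτ : 0 < τ.im)
    (hz : φ τ z ≠ 0) {x y : ι → ℤ} (hxy : ν x y ≠ 0) :
    ∃ m : ℤ, t * (bilinZ S x y : ℚ) = m := by
  obtain ⟨m, hm⟩ :=
    exists_int_eq_of_exp_neg_two_pi_I_mul_eq_one (hφ.exp_bilinZ_eq_one hτ hz hxy)
  exact ⟨m, by exact_mod_cast hm⟩

lemma nu_zero_left (hφ : IsJacobiForm S k t χ ν f φ) (hT : χ ModularGroup.T ≠ 0)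
    (hτ : 0 < τ.im) (hz : φ τ z ≠ 0) {x : ι → ℤ} (hx : ν x 0 ≠ 0) :
    ν 0 x = exp (-(π * I * t * bilinZ S x x)) := by
  have hτ1 : 0 < (τ + 1).im := by simpa using hτ
  have h := hφ.apply_add_period hτ1 x z
  rw [show (fun i => z i + x i * (τ + 1)) = (fun i => z i + x i * τ + x i) by funext i; ring,
    hφ.apply_add_one hτ, hφ.apply_add_one hτ, hφ.apply_add_period_add_lattice hτ,
    hφ.nu_eq_mul hτ hz x x, ellipticFactor_add_one] at h
  refine mul_right_cancel₀
    (mul_ne_zero (mul_ne_zero (mul_ne_zero hT hx) (ellipticFactor_ne_zero S t τ x z)) hz) ?_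
  linear_combination h

lemma nu_neg_zero (hφ : IsJacobiForm S k t χ ν f φ) (hS : S.IsSymm)
    (hχS : χ ModularGroup.S ≠ 0) (hτ : 0 < τ.im) (hz : φ τ z ≠ 0) (y : ι → ℤ) :
    ν (-y) 0 = ν 0 y := by
  have hτ0 : τ ≠ 0 := by
    rintro rfl
    simp at hτ
  have hτS : 0 < (-1 / τ).im := by
    rw [neg_div, neg_im, div_im]
    simpa using div_pos hτ (normSq_pos.mpr hτ0)
  have h := hφ.apply_add_period hτS (-y) (fun i => z i / τ)
  rw [show (fun i => z i / τ + ((-y) i : ℂ) * (-1 / τ)) = (fun i => (z i + y i) / τ) by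
      funext i; simp only [Pi.neg_apply, Int.cast_neg]; field_simp,
    hφ.apply_neg_inv hτ, hφ.apply_neg_inv hτ, hφ.apply_add_lattice hτ] at h
  have hθ := ellipticFactor_neg_inv_mul t τ hS y z
  have hk : τ ^ (k : ℂ) ≠ 0 := by simp [cpow_eq_zero_iff, hτ0]
  refine mul_right_cancel₀ (mul_ne_zero (mul_ne_zero (mul_ne_zero hχS hk) (exp_ne_zero
    (π * I * t * bilinC S (fun i => z i + y i) (fun i => z i + y i) / τ))) hz) ?_
  linear_combination (-1 : ℂ) * h - ν (-y) 0 * χ ModularGroup.S * τ ^ (k : ℂ) * φ τ z * hθ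

end IsJacobiForm

end

theorem statement2_general {ι : Type*} [Fintype ι] (S : Matrix ι ι ℤ) (hS : IsEvenPosDef S)
    (k t : ℚ)
    (χ : SL2Z → ℂ) (hχ : ∀ A, HasFiniteOrder (χ A))
    (ν : (ι → ℤ) → (ι → ℤ) → ℂ) (hν : ∀ x y, HasFiniteOrder (ν x y))
    (f : ℚ × (ι → ℚ) → ℂ) (φ : ℂ → (ι → ℂ) → ℂ)
    (hφ : IsJacobiForm S k t χ ν f φ)
    (hne : ∃ (τ : ℂ) (z : ι → ℂ), 0 < τ.im ∧ φ τ z ≠ 0) :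
    (∀ x y : ι → ℤ, ∃ m : ℤ, t * (bilinZ S x y : ℚ) = m) ∧
    (∀ x y : ι → ℤ,
      ν x y = Complex.exp ((π : ℂ) * I * (t : ℂ)
        * ((bilinZ S x x : ℂ) + (bilinZ S y y : ℂ)))) := by
  obtain ⟨τ, z, hτ, hz⟩ := hne
  have hν0 : ∀ x y, ν x y ≠ 0 := fun x y => (hν x y).ne_zero
  have hint : ∀ x y : ι → ℤ, ∃ m : ℤ, t * (bilinZ S x y : ℚ) = m := fun x y =>
    hφ.exists_int_mul_bilinZ_eq hτ hz (hν0 x y)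
  have hνx0 : ∀ x, ν x 0 = exp (-(π * I * t * bilinZ S x x)) := fun x => by
    simpa only [neg_neg, bilinZ_neg_neg] using
      (hφ.nu_neg_zero hS.symm (hχ _).ne_zero hτ hz (-x)).trans
        (hφ.nu_zero_left (hχ _).ne_zero hτ hz (hν0 _ 0))
  have hflip : ∀ w, exp (-(π * I * t * bilinZ S w w)) = exp (π * I * t * bilinZ S w w) :=
    fun w => by
      obtain ⟨m, hm⟩ := hint w w
      simpa only [mul_assoc] using exp_neg_pi_I_mul_of_eq_intCast (a := t * bilinZ S w w)
        (m := m) (by exact_mod_cast hm)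
  refine ⟨hint, fun x y => ?_⟩
  rw [hφ.nu_eq_mul hτ hz, hφ.nu_zero_left (hχ _).ne_zero hτ hz (hν0 y 0), hνx0, hflip, hflip,
    ← exp_add]
  ring_nf

/-- A nonzero Jacobi form of index `t` forces `t·(x,y) ∈ ℤ` for all lattice
vectors (equivalently `t·s(L) ∈ ℤ`), and the Heisenberg character is determined by `t`. -/
theorem statement2 {ι : Type*} [Fintype ι] (S : Matrix ι ι ℤ) (hS : IsEvenPosDef S)
    (k t : ℚ) (ht : 0 < t)
    (χ : SL2Z → ℂ) (hχ : ∀ A, HasFiniteOrder (χ A))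
    (ν : (ι → ℤ) → (ι → ℤ) → ℂ) (hν : ∀ x y, HasFiniteOrder (ν x y))
    (f : ℚ × (ι → ℚ) → ℂ) (φ : ℂ → (ι → ℂ) → ℂ)
    (hφ : IsJacobiForm S k t χ ν f φ)
    (hne : ∃ (τ : ℂ) (z : ι → ℂ), 0 < τ.im ∧ φ τ z ≠ 0) :
    (∀ x y : ι → ℤ, ∃ m : ℤ, t * (bilinZ S x y : ℚ) = m) ∧
    (∀ x y : ι → ℤ,
      ν x y = Complex.exp ((π : ℂ) * I * (t : ℂ)
        * ((bilinZ S x x : ℂ) + (bilinZ S y y : ℂ)))) :=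
  statement2_general S hS k t χ hχ ν hν f φ hφ hne
end
end

section
/- Let L be an even positive definite lattice of rank n with bilinear form (·,·), extended ℝ- and ℂ-bilinearly. For Z = (ω,𝔷,τ) in the tube domain H(L) set ṽ(Z) := Im(ω) − (Im 𝔷, Im 𝔷)/(2 Im τ), so ṽ(Z) > 0. Then for every A = (a,b;c,d) ∈ SL₂(ℝ) the point {A}⟨Z⟩ := (ω − c(𝔷,𝔷)/(2(cτ+d)), 𝔷/(cτ+d), (aτ+b)/(cτ+d)) again lies in H(L) and satisfies ṽ({A}⟨Z⟩) = ṽ(Z), and for all x,y ∈ L⊗ℝ = ℝⁿ and r ∈ ℝ the point [x,y;r]⟨Z⟩ := (ω + (1/2)(x,x)τ + (x,𝔷) + (1/2)(x,y) + r, 𝔷 + xτ + y, τ) again lies in H(L) and satisfies ṽ([x,y;r]⟨Z⟩) = ṽ(Z). -/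
/-!
Both actions preserve `ṽ` by direct computation. For `j = cτ + d` one has
`Im τ' = Im τ / |j|²`, and the identity
`|j|² (Im(𝔷/j), Im(𝔷/j)) + Im j · Im((𝔷,𝔷)/j) = (Im 𝔷, Im 𝔷)` with `Im j = c Im τ` absorbs the
correction term of `ω`; for the Heisenberg part the cross terms cancel by symmetry of the form.
The form is positive semidefinite on `ℝⁿ` (by density of `ℚⁿ`), so `ṽ > 0` together with
`Im τ > 0` forces membership in `H(L)`, and invariance of `ṽ` gives invariance of `H(L)`.
-/

open Complex Matrix
open scoped Real BigOperators Classical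

noncomputable section

section BilinearForms

variable {ι : Type*} [Fintype ι] (S : Matrix ι ι ℤ)

lemma bilinR_linear_comb (a b c d : ℝ) (f g : ι → ℝ) :
    bilinR S (fun i => a * f i + b * g i) (fun i => c * f i + d * g i)
      = a * c * bilinR S f f + a * d * bilinR S f g + b * c * bilinR S g f
        + b * d * bilinR S g g := by
  simp only [bilinR, Finset.mul_sum, ← Finset.sum_add_distrib]
  refine Finset.sum_congr rfl fun i _ => Finset.sum_congr rfl fun j _ => ?_
  ring

lemma bilinR_comm (hS : S.IsSymm) (f g : ι → ℝ) : bilinR S f g = bilinR S g f := by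
  rw [bilinR, Finset.sum_comm]
  refine Finset.sum_congr rfl fun i _ => Finset.sum_congr rfl fun j _ => ?_
  rw [← hS.apply i j]
  ring

lemma bilinC_re (z w : ι → ℂ) : (bilinC S z w).re
    = bilinR S (fun i => (z i).re) (fun i => (w i).re)
      - bilinR S (fun i => (z i).im) (fun i => (w i).im) := by
  simp only [bilinC, bilinR, Complex.re_sum, Complex.mul_im, Complex.mul_re,
    Complex.intCast_re, Complex.intCast_im, ← Finset.sum_sub_distrib]
  refine Finset.sum_congr rfl fun i _ => Finset.sum_congr rfl fun j _ => ?_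
  ring

lemma bilinC_im (z w : ι → ℂ) : (bilinC S z w).im
    = bilinR S (fun i => (z i).re) (fun i => (w i).im)
      + bilinR S (fun i => (z i).im) (fun i => (w i).re) := by
  simp only [bilinC, bilinR, Complex.im_sum, Complex.mul_im, Complex.mul_re,
    Complex.intCast_re, Complex.intCast_im, ← Finset.sum_add_distrib]
  refine Finset.sum_congr rfl fun i _ => Finset.sum_congr rfl fun j _ => ?_
  ring

lemma bilinC_ofReal_left_im (x : ι → ℝ) (z : ι → ℂ) :
    (bilinC S (fun i => (x i : ℂ)) z).im = bilinR S x (fun i => (z i).im) := by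
  simp [bilinC_im, bilinR]

lemma bilinR_self_nonneg (hS : ∀ q : ι → ℚ, 0 ≤ bilinQ S q q) (x : ι → ℝ) :
    0 ≤ bilinR S x x := by
  have hdense : DenseRange (Pi.map fun _ : ι => ((↑) : ℚ → ℝ)) :=
    DenseRange.piMap fun _ => Rat.denseRange_cast
  refine hdense.induction_on x (isClosed_le continuous_const (by unfold bilinR; fun_prop))
    fun q => ?_
  have hcast : bilinR S (Pi.map (fun _ => ((↑) : ℚ → ℝ)) q) (Pi.map (fun _ => ((↑) : ℚ → ℝ)) q)
      = bilinQ S q q := by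
    simp [bilinR, bilinQ]
  exact hcast ▸ Rat.cast_nonneg.mpr (hS q)

lemma normSq_mul_bilinR_im_div_add (z : ι → ℂ) {j : ℂ} (hj : j ≠ 0) :
    normSq j * bilinR S (fun i => (z i / j).im) (fun i => (z i / j).im)
      + j.im * (bilinC S z z / j).im
      = bilinR S (fun i => (z i).im) (fun i => (z i).im) := by
  have hn : normSq j ≠ 0 := normSq_pos.mpr hj |>.ne'
  have him : (fun i => (z i / j).im)
      = fun i => (j.re / normSq j) * (z i).im + (-j.im / normSq j) * (z i).re := by
    funext i
    rw [Complex.div_im]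
    ring
  rw [him, bilinR_linear_comb, Complex.div_im, bilinC_re, bilinC_im]
  field_simp
  linear_combination (-bilinR S (fun i => (z i).im) (fun i => (z i).im)) * normSq_apply j

variable {S}

lemma IsEvenPosDef.bilinR_self_nonneg (hS : IsEvenPosDef S) (x : ι → ℝ) :
    0 ≤ bilinR S x x := by
  refine _root_.bilinR_self_nonneg S (fun q => ?_) x
  rcases eq_or_ne q 0 with rfl | hq
  · simp [bilinQ]
  · exact (hS.posdef q hq).le

end BilinearForms

section Moebius

variable {a b c d : ℝ} {τ : ℂ}

lemma ofReal_mul_add_ofReal_ne_zero_of_det_eq_one (hdet : a * d - b * c = 1) (hτ : τ.im ≠ 0) :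
    (c : ℂ) * τ + d ≠ 0 := by
  intro h
  have hc : c = 0 := by simpa [hτ] using congrArg Complex.im h
  have hd : d = 0 := by simpa [hc] using congrArg Complex.re h
  simp [hc, hd] at hdet

lemma im_div_of_det_eq_one (hdet : a * d - b * c = 1) :
    ((a * τ + b) / (c * τ + d)).im = τ.im / normSq (c * τ + d) := by
  rw [Complex.div_im, div_sub_div_same]
  congr 1
  simp
  linear_combination τ.im * hdet

lemma im_div_pos_of_det_eq_one (hdet : a * d - b * c = 1) (hτ : 0 < τ.im) :
    0 < ((a * τ + b) / (c * τ + d)).im := by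
  rw [im_div_of_det_eq_one hdet]
  exact div_pos hτ (normSq_pos.mpr (ofReal_mul_add_ofReal_ne_zero_of_det_eq_one hdet hτ.ne'))

end Moebius

section TubeDomain

variable {ι : Type*} [Fintype ι] (S : Matrix ι ι ℤ)

def InTube (ω τ : ℂ) (z : ι → ℂ) : Prop :=
  0 < ω.im ∧ 0 < τ.im ∧ 0 < 2 * ω.im * τ.im - bilinR S (fun i => (z i).im) (fun i => (z i).im)

/-- The paper's `ṽ(ω, 𝔷, τ)`. -/
def tubeHeight (ω τ : ℂ) (z : ι → ℂ) : ℝ :=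
  ω.im - bilinR S (fun i => (z i).im) (fun i => (z i).im) / (2 * τ.im)

variable {S}

lemma tubeHeight_pos {ω τ : ℂ} {z : ι → ℂ} (hτ : 0 < τ.im)
    (hZ : 0 < 2 * ω.im * τ.im - bilinR S (fun i => (z i).im) (fun i => (z i).im)) :
    0 < tubeHeight S ω τ z := by
  rw [tubeHeight, sub_pos, div_lt_iff₀ (by positivity)]
  linarith

lemma inTube_of_tubeHeight_pos {ω τ : ℂ} {z : ι → ℂ}
    (hB : 0 ≤ bilinR S (fun i => (z i).im) (fun i => (z i).im)) (hτ : 0 < τ.im)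
    (hv : 0 < tubeHeight S ω τ z) : InTube S ω τ z := by
  rw [tubeHeight] at hv
  have hBτ : 0 ≤ bilinR S (fun i => (z i).im) (fun i => (z i).im) / (2 * τ.im) := by positivity
  refine ⟨by linarith, hτ, ?_⟩
  have h2 : 2 * ω.im * τ.im - bilinR S (fun i => (z i).im) (fun i => (z i).im)
      = 2 * τ.im * (ω.im - bilinR S (fun i => (z i).im) (fun i => (z i).im) / (2 * τ.im)) := by
    field_simp
  rw [h2]
  positivity

variable (S)

lemma tubeHeight_moebius (ω : ℂ) (z : ι → ℂ) {a b c d : ℝ} (hdet : a * d - b * c = 1) {τ : ℂ}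
    (hτ : τ.im ≠ 0) :
    tubeHeight S (ω - (c : ℂ) * bilinC S z z / (2 * ((c : ℂ) * τ + d)))
      ((a * τ + b) / (c * τ + d)) (fun i => z i / (c * τ + d)) = tubeHeight S ω τ z := by
  have hj := ofReal_mul_add_ofReal_ne_zero_of_det_eq_one hdet hτ
  have hjim : ((c : ℂ) * τ + d).im = c * τ.im := by simp
  have hω : (ω - (c : ℂ) * bilinC S z z / (2 * ((c : ℂ) * τ + d))).im
      = ω.im - c / 2 * (bilinC S z z / ((c : ℂ) * τ + d)).im := by
    rw [show (c : ℂ) * bilinC S z z / (2 * ((c : ℂ) * τ + d))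
        = ((c / 2 : ℝ) : ℂ) * (bilinC S z z / ((c : ℂ) * τ + d)) by
          rw [mul_comm (2 : ℂ), ← div_div]; push_cast; ring,
      sub_im, im_ofReal_mul]
  rw [tubeHeight, tubeHeight, im_div_of_det_eq_one hdet, hω,
    ← normSq_mul_bilinR_im_div_add S z hj, hjim]
  field_simp
  ring

lemma tubeHeight_heisenberg (hS : S.IsSymm) (ω : ℂ) (z : ι → ℂ) (x y : ι → ℝ) (r : ℝ) {τ : ℂ}
    (hτ : τ.im ≠ 0) :
    tubeHeight S (ω + (bilinR S x x : ℂ) * τ / 2 + bilinC S (fun i => (x i : ℂ)) z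
        + ((bilinR S x y / 2 : ℝ) : ℂ) + (r : ℂ)) τ (fun i => z i + (x i : ℂ) * τ + (y i : ℂ))
      = tubeHeight S ω τ z := by
  have hz : (fun i => (z i + (x i : ℂ) * τ + (y i : ℂ)).im)
      = fun i => 1 * (z i).im + τ.im * x i := by
    funext i
    simp only [add_im, mul_im, ofReal_re, ofReal_im]
    ring
  have hω : (ω + (bilinR S x x : ℂ) * τ / 2 + bilinC S (fun i => (x i : ℂ)) z
        + ((bilinR S x y / 2 : ℝ) : ℂ) + (r : ℂ)).im
      = ω.im + bilinR S x x * τ.im / 2 + bilinR S x (fun i => (z i).im) := by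
    simp [bilinC_ofReal_left_im]
  rw [tubeHeight, tubeHeight, hz, hω, bilinR_linear_comb, bilinR_comm S hS (fun i => (z i).im) x]
  field_simp
  ring

end TubeDomain

theorem statement5_general {ι : Type*} [Fintype ι] (S : Matrix ι ι ℤ) (hS : IsEvenPosDef S)
    (ω τ : ℂ) (z : ι → ℂ) (hτ : 0 < τ.im)
    (hZ : 0 < 2 * ω.im * τ.im
        - bilinR S (fun i => (z i).im) (fun i => (z i).im)) :
    (∀ A : Matrix.SpecialLinearGroup (Fin 2) ℝ,
      (0 < (ω - (A.1 1 0 : ℂ) * bilinC S z z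
              / (2 * ((A.1 1 0 : ℂ) * τ + (A.1 1 1 : ℂ)))).im ∧
       0 < (((A.1 0 0 : ℂ) * τ + (A.1 0 1 : ℂ))
              / ((A.1 1 0 : ℂ) * τ + (A.1 1 1 : ℂ))).im ∧
       0 < 2 * (ω - (A.1 1 0 : ℂ) * bilinC S z z
              / (2 * ((A.1 1 0 : ℂ) * τ + (A.1 1 1 : ℂ)))).im
            * (((A.1 0 0 : ℂ) * τ + (A.1 0 1 : ℂ))
              / ((A.1 1 0 : ℂ) * τ + (A.1 1 1 : ℂ))).im
            - bilinR S (fun i => (z i / ((A.1 1 0 : ℂ) * τ + (A.1 1 1 : ℂ))).im)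
                (fun i => (z i / ((A.1 1 0 : ℂ) * τ + (A.1 1 1 : ℂ))).im)) ∧
      (ω - (A.1 1 0 : ℂ) * bilinC S z z
          / (2 * ((A.1 1 0 : ℂ) * τ + (A.1 1 1 : ℂ)))).im
        - bilinR S (fun i => (z i / ((A.1 1 0 : ℂ) * τ + (A.1 1 1 : ℂ))).im)
            (fun i => (z i / ((A.1 1 0 : ℂ) * τ + (A.1 1 1 : ℂ))).im)
          / (2 * (((A.1 0 0 : ℂ) * τ + (A.1 0 1 : ℂ))
              / ((A.1 1 0 : ℂ) * τ + (A.1 1 1 : ℂ))).im)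
        = ω.im - bilinR S (fun i => (z i).im) (fun i => (z i).im) / (2 * τ.im)) ∧
    (∀ (x y : ι → ℝ) (r : ℝ),
      (0 < (ω + (bilinR S x x : ℂ) * τ / 2 + bilinC S (fun i => (x i : ℂ)) z
              + ((bilinR S x y / 2 : ℝ) : ℂ) + (r : ℂ)).im ∧
       0 < τ.im ∧
       0 < 2 * (ω + (bilinR S x x : ℂ) * τ / 2 + bilinC S (fun i => (x i : ℂ)) z
              + ((bilinR S x y / 2 : ℝ) : ℂ) + (r : ℂ)).im * τ.im
            - bilinR S (fun i => (z i + (x i : ℂ) * τ + (y i : ℂ)).im)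
                (fun i => (z i + (x i : ℂ) * τ + (y i : ℂ)).im)) ∧
      (ω + (bilinR S x x : ℂ) * τ / 2 + bilinC S (fun i => (x i : ℂ)) z
          + ((bilinR S x y / 2 : ℝ) : ℂ) + (r : ℂ)).im
        - bilinR S (fun i => (z i + (x i : ℂ) * τ + (y i : ℂ)).im)
            (fun i => (z i + (x i : ℂ) * τ + (y i : ℂ)).im) / (2 * τ.im)
        = ω.im - bilinR S (fun i => (z i).im) (fun i => (z i).im) / (2 * τ.im)) := by
  have hv := tubeHeight_pos hτ hZ
  have hB (w : ι → ℂ) := hS.bilinR_self_nonneg (fun i => (w i).im)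
  refine ⟨fun A => ?_, fun x y r => ?_⟩
  · have hdet : A.1 0 0 * A.1 1 1 - A.1 0 1 * A.1 1 0 = 1 := by
      rw [← Matrix.det_fin_two]
      exact A.2
    have hinv := tubeHeight_moebius S ω z hdet hτ.ne'
    exact ⟨inTube_of_tubeHeight_pos (hB _) (im_div_pos_of_det_eq_one hdet hτ) (hinv ▸ hv), hinv⟩
  · have hinv := tubeHeight_heisenberg S hS.symm ω z x y r hτ.ne'
    exact ⟨inTube_of_tubeHeight_pos (hB _) hτ (hinv ▸ hv), hinv⟩

/-- The quantity `ṽ(Z) = Im ω − (Im 𝔷, Im 𝔷)/(2 Im τ)` on the tube domain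
`H(L)` is invariant under the real Jacobi group: both the `SL₂(ℝ)`-part and the real
Heisenberg part preserve `H(L)` and preserve `ṽ`. -/
theorem statement5 {ι : Type*} [Fintype ι] (S : Matrix ι ι ℤ) (hS : IsEvenPosDef S)
    (ω τ : ℂ) (z : ι → ℂ) (hω : 0 < ω.im) (hτ : 0 < τ.im)
    (hZ : 0 < 2 * ω.im * τ.im
        - bilinR S (fun i => (z i).im) (fun i => (z i).im)) :
    (∀ A : Matrix.SpecialLinearGroup (Fin 2) ℝ,
      (0 < (ω - (A.1 1 0 : ℂ) * bilinC S z z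
              / (2 * ((A.1 1 0 : ℂ) * τ + (A.1 1 1 : ℂ)))).im ∧
       0 < (((A.1 0 0 : ℂ) * τ + (A.1 0 1 : ℂ))
              / ((A.1 1 0 : ℂ) * τ + (A.1 1 1 : ℂ))).im ∧
       0 < 2 * (ω - (A.1 1 0 : ℂ) * bilinC S z z
              / (2 * ((A.1 1 0 : ℂ) * τ + (A.1 1 1 : ℂ)))).im
            * (((A.1 0 0 : ℂ) * τ + (A.1 0 1 : ℂ))
              / ((A.1 1 0 : ℂ) * τ + (A.1 1 1 : ℂ))).im
            - bilinR S (fun i => (z i / ((A.1 1 0 : ℂ) * τ + (A.1 1 1 : ℂ))).im)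
                (fun i => (z i / ((A.1 1 0 : ℂ) * τ + (A.1 1 1 : ℂ))).im)) ∧
      (ω - (A.1 1 0 : ℂ) * bilinC S z z
          / (2 * ((A.1 1 0 : ℂ) * τ + (A.1 1 1 : ℂ)))).im
        - bilinR S (fun i => (z i / ((A.1 1 0 : ℂ) * τ + (A.1 1 1 : ℂ))).im)
            (fun i => (z i / ((A.1 1 0 : ℂ) * τ + (A.1 1 1 : ℂ))).im)
          / (2 * (((A.1 0 0 : ℂ) * τ + (A.1 0 1 : ℂ))
              / ((A.1 1 0 : ℂ) * τ + (A.1 1 1 : ℂ))).im)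
        = ω.im - bilinR S (fun i => (z i).im) (fun i => (z i).im) / (2 * τ.im)) ∧
    (∀ (x y : ι → ℝ) (r : ℝ),
      (0 < (ω + (bilinR S x x : ℂ) * τ / 2 + bilinC S (fun i => (x i : ℂ)) z
              + ((bilinR S x y / 2 : ℝ) : ℂ) + (r : ℂ)).im ∧
       0 < τ.im ∧
       0 < 2 * (ω + (bilinR S x x : ℂ) * τ / 2 + bilinC S (fun i => (x i : ℂ)) z
              + ((bilinR S x y / 2 : ℝ) : ℂ) + (r : ℂ)).im * τ.im
            - bilinR S (fun i => (z i + (x i : ℂ) * τ + (y i : ℂ)).im)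
                (fun i => (z i + (x i : ℂ) * τ + (y i : ℂ)).im)) ∧
      (ω + (bilinR S x x : ℂ) * τ / 2 + bilinC S (fun i => (x i : ℂ)) z
          + ((bilinR S x y / 2 : ℝ) : ℂ) + (r : ℂ)).im
        - bilinR S (fun i => (z i + (x i : ℂ) * τ + (y i : ℂ)).im)
            (fun i => (z i + (x i : ℂ) * τ + (y i : ℂ)).im) / (2 * τ.im)
        = ω.im - bilinR S (fun i => (z i).im) (fun i => (z i).im) / (2 * τ.im)) :=
  statement5_general S hS ω τ z hτ hZ
end
end

section
/- Let L be an even positive definite lattice, M ⊂ L a sublattice with 0 < rank M < rank L, M^⊥ = {x ∈ L : (x,M) = 0}, and let φ ∈ J_{k,L;t}(χ₁ × ν) be a holomorphic Jacobi form with Fourier coefficients f(n,l). For l ∈ (1/2)L^∨ let l_⊥ denote the orthogonal projection of l onto M^⊥⊗ℚ. If the pullback φ|_M(τ,𝔷_m) := φ(τ, 𝔷_m ⊕ 0) is not identically zero, then Ord(φ|_M) ≥ min{(l_⊥, l_⊥) : f(n,l) ≠ 0}. In particular, if l_⊥ ≠ 0 for every pair (n,l) with f(n,l) ≠ 0, then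 φ|_M is a Jacobi cusp form or identically zero. -/
open Complex Matrix
open scoped Real BigOperators Classical

noncomputable section

/-!
Restricted to `z = B w`, the term `f(n, l) e(nτ + (l, z))` of the expansion of `φ` has frequency
`(n, ((l, b_a))_a)` in `(Re τ, w)`, where the `b_a` are the columns of `B`, and these pairings only
see the orthogonal projection `l_M = l - l_⊥` of `l` to `M ⊗ ℚ`. Coefficients of absolutely
convergent exponential sums are unique (take Bohr means along a line on which all rational
frequencies stay distinct), so every index `(n, l')` in the support of `φ|_M` equals `(n, l_M)` for
some `(n, l)` in the support of `φ`. Hence `2nt - (l', l') = (2nt - (l, l)) + (l_⊥, l_⊥)`, and the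
first summand is nonnegative.
-/

open MeasureTheory Filter Topology

def cexpAverage (γ T : ℝ) : ℂ := (T : ℂ)⁻¹ * ∫ s in (0 : ℝ)..T, cexp (γ * I * s)

lemma norm_cexp_ofReal_mul_I_mul (γ s : ℝ) : ‖cexp (γ * I * s)‖ = 1 := by
  rw [Complex.norm_exp]
  simp

lemma norm_cexpAverage_le_one (γ : ℝ) {T : ℝ} (hT : 0 < T) : ‖cexpAverage γ T‖ ≤ 1 := by
  have h := intervalIntegral.norm_integral_le_of_norm_le_const (a := 0) (b := T) (C := 1)
    fun s _ => (norm_cexp_ofReal_mul_I_mul γ s).le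
  rw [sub_zero, abs_of_pos hT, one_mul] at h
  rw [cexpAverage, norm_mul, norm_inv, Complex.norm_real, Real.norm_of_nonneg hT.le]
  exact inv_mul_le_one_of_le₀ h hT.le

lemma tendsto_cexpAverage (γ : ℝ) :
    Tendsto (cexpAverage γ) atTop (𝓝 (if γ = 0 then 1 else 0)) := by
  split_ifs with hγ
  · refine tendsto_const_nhds.congr' ?_
    filter_upwards [eventually_ne_atTop 0] with T hT
    simp [cexpAverage, hγ, hT]
  · have hc : (γ : ℂ) * I ≠ 0 := by simp [hγ]
    have hbound : ∀ T : ℝ, ‖∫ s in (0 : ℝ)..T, cexp (γ * I * s)‖ ≤ 2 / |γ| := by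
      intro T
      rw [integral_exp_mul_complex hc, norm_div]
      have h2 : ‖cexp (γ * I * T) - cexp (γ * I * (0 : ℝ))‖ ≤ 2 := by
        calc _ ≤ ‖cexp (γ * I * T)‖ + ‖cexp (γ * I * (0 : ℝ))‖ := norm_sub_le _ _
          _ = 2 := by rw [norm_cexp_ofReal_mul_I_mul, norm_cexp_ofReal_mul_I_mul]; norm_num
      simpa using div_le_div_of_nonneg_right h2 (abs_nonneg γ)
    have hinv : Tendsto (fun T : ℝ => (T : ℂ)⁻¹) atTop (𝓝 0) := by
      simpa using ((Complex.continuous_ofReal.tendsto 0).comp tendsto_inv_atTop_zero).congr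
        fun T => (Complex.ofReal_inv T)
    exact hinv.zero_mul_isBoundedUnder_le (isBoundedUnder_of ⟨2 / |γ|, hbound⟩)

/-- The mean value `∑_{β_j = 0} a_j` of `∑ a_j e^{i β_j s}` is the limit of its averages over
`[0, T]`, by dominated convergence. -/
lemma tsum_subtype_eq_zero_of_hasSum_cexp {J : Type*} [Countable J] {a : J → ℂ} {β : J → ℝ}
    (h : ∀ s : ℝ, HasSum (fun j => a j * cexp (β j * I * s)) 0) :
    ∑' j : {j | β j = 0}, a j = 0 := by
  have ha : Summable (‖a ·‖) := summable_norm_iff.mpr (by simpa using (h 0).summable)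
  have hmean : ∀ T : ℝ, ∑' j, a j * cexpAverage (β j) T = 0 := by
    intro T
    have hint := intervalIntegral.hasSum_integral_of_dominated_convergence (μ := volume)
      (a := 0) (b := T) (fun j _ => ‖a j‖)
      (fun j => (by fun_prop : Continuous fun s : ℝ => a j * cexp (β j * I * s))
        |>.aestronglyMeasurable)
      (fun j => ae_of_all _ fun s _ => by rw [norm_mul, norm_cexp_ofReal_mul_I_mul, mul_one])
      (ae_of_all _ fun _ _ => ha) intervalIntegrable_const (ae_of_all _ fun s _ => h s)
    simpa [cexpAverage, intervalIntegral.integral_const_mul, mul_left_comm]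
      using (hint.mul_left (T : ℂ)⁻¹).tsum_eq
  have hlim := tendsto_tsum_of_dominated_convergence ha
    (fun j => (tendsto_cexpAverage (β j)).const_mul (a j))
    (by
      filter_upwards [eventually_gt_atTop 0] with T hT j
      rw [norm_mul]
      exact mul_le_of_le_one_right (norm_nonneg _) (norm_cexpAverage_le_one _ hT))
  simp only [hmean, tendsto_const_nhds_iff] at hlim
  have hind : {j | β j = 0}.indicator a = fun j => a j * if β j = 0 then 1 else 0 := by
    ext j
    simp [Set.indicator_apply]
  rw [tsum_subtype, hind, ← hlim]

-- The bad `y` lie on countably many hyperplanes.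
lemma exists_forall_sum_mul_ne_zero (κ : Type*) [Fintype κ] :
    ∃ y : κ → ℝ, ∀ w : κ → ℚ, w ≠ 0 → ∑ i, (w i : ℝ) * y i ≠ 0 := by
  have hnull : ∀ w : κ → ℚ, w ≠ 0 → volume {y : κ → ℝ | ∑ i, (w i : ℝ) * y i = 0} = 0 := by
    intro w hw
    obtain ⟨i, hi⟩ := Function.ne_iff.mp hw
    refine Measure.addHaar_submodule volume
      (LinearMap.ker (dotProductBilin ℝ ℝ fun i => (w i : ℝ))) ?_
    rw [Ne, LinearMap.ker_eq_top]
    intro h0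
    exact hi (by simpa using LinearMap.congr_fun h0 (Pi.single i 1))
  have : volume (⋃ (w : κ → ℚ) (_ : w ≠ 0), {y : κ → ℝ | ∑ i, (w i : ℝ) * y i = 0}) = 0 :=
    measure_iUnion_null fun w => measure_iUnion_null fun hw => hnull w hw
  obtain ⟨y, hy⟩ := (measure_eq_zero_iff_ae_notMem.mp this).exists
  simp only [Set.mem_iUnion, Set.mem_ofPred, not_exists] at hy
  exact ⟨y, hy⟩

lemma tsum_subtype_eq_zero_of_hasSum_cexp_sum {J κ : Type*} [Countable J] [Fintype κ]
    {a : J → ℂ} {v : J → κ → ℚ}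
    (h : ∀ x : κ → ℝ, HasSum (fun j => a j * cexp (2 * π * I * ∑ i, (v j i : ℂ) * x i)) 0)
    (u : κ → ℚ) : ∑' j : {j | v j = u}, a j = 0 := by
  -- restrict to the line `s • y`, along which distinct rational frequencies stay distinct
  obtain ⟨y, hy⟩ := exists_forall_sum_mul_ne_zero κ
  set β : J → ℝ := fun j => 2 * π * ∑ i, ((v j i - u i : ℚ) : ℝ) * y i
  have hβ : {j | β j = 0} = {j | v j = u} := by
    ext j
    rw [Set.mem_ofPred, Set.mem_ofPred, ← sub_eq_zero (a := v j)]
    simp only [β, mul_eq_zero, Real.pi_ne_zero, OfNat.ofNat_ne_zero, false_or]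
    refine ⟨fun h0 => by_contra fun hne => hy _ hne h0, fun h0 => ?_⟩
    simp [← Pi.sub_apply, h0]
  have hline : ∀ s : ℝ, HasSum (fun j => a j * cexp (β j * I * s)) 0 := fun s => by
    have := (h (s • y)).mul_right (cexp (-(2 * π * I * ∑ i, (u i : ℂ) * (s * y i))))
    rw [zero_mul] at this
    have e : ∀ j, a j * cexp (β j * I * s) = a j * cexp (2 * π * I * ∑ i, (v j i : ℂ) * (s • y) i)
        * cexp (-(2 * π * I * ∑ i, (u i : ℂ) * (s * y i))) := fun j => by
      rw [mul_assoc (a j), ← Complex.exp_add]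
      congr 2
      simp only [β, Pi.smul_apply, smul_eq_mul]
      push_cast
      simp only [Finset.mul_sum, Finset.sum_mul, ← Finset.sum_neg_distrib, ← Finset.sum_add_distrib]
      exact Finset.sum_congr rfl fun i _ => by ring
    simpa only [e] using this
  have := tsum_subtype_eq_zero_of_hasSum_cexp hline
  rwa [hβ] at this

section Bilinear

variable {ι κ : Type*} [Fintype ι]

lemma bilinQ_eq_dotProduct (S : Matrix ι ι ℤ) (x y : ι → ℚ) :
    bilinQ S x y = x ⬝ᵥ (S.map (Int.cast : ℤ → ℚ) *ᵥ y) := by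
  simp [bilinQ, dotProduct, mulVec, Finset.mul_sum, mul_assoc]

lemma bilinC_eq_dotProduct (S : Matrix ι ι ℤ) (x y : ι → ℂ) :
    bilinC S x y = x ⬝ᵥ (S.map (Int.cast : ℤ → ℂ) *ᵥ y) := by
  simp [bilinC, dotProduct, mulVec, Finset.mul_sum, mul_assoc]

lemma bilinQ_comm {S : Matrix ι ι ℤ} (hS : S.IsSymm) (x y : ι → ℚ) :
    bilinQ S x y = bilinQ S y x := by
  rw [bilinQ_eq_dotProduct, bilinQ_eq_dotProduct, dotProduct_mulVec, ← mulVec_transpose,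
    ← transpose_map, hS.eq, dotProduct_comm]

lemma bilinQ_add_left (S : Matrix ι ι ℤ) (x y z : ι → ℚ) :
    bilinQ S (x + y) z = bilinQ S x z + bilinQ S y z := by
  simp only [bilinQ_eq_dotProduct, add_dotProduct]

lemma bilinQ_add_right (S : Matrix ι ι ℤ) (x y z : ι → ℚ) :
    bilinQ S x (y + z) = bilinQ S x y + bilinQ S x z := by
  simp only [bilinQ_eq_dotProduct, mulVec_add, dotProduct_add]

/-- The pairings `(l, b_a)` of `l` with the columns `b_a` of `B`. -/
def colPairing (S : Matrix ι ι ℤ) (B : Matrix ι κ ℤ) (l : ι → ℚ) : κ → ℚ :=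
  l ᵥ* S.map (Int.cast : ℤ → ℚ) ᵥ* B.map (Int.cast : ℤ → ℚ)

lemma colPairing_sub (S : Matrix ι ι ℤ) (B : Matrix ι κ ℤ) (x y : ι → ℚ) :
    colPairing S B (x - y) = colPairing S B x - colPairing S B y := by
  simp only [colPairing, sub_vecMul]

variable [Fintype κ]

lemma bilinQ_mulVec_right (S : Matrix ι ι ℤ) (B : Matrix ι κ ℤ) (l : ι → ℚ) (w : κ → ℚ) :
    bilinQ S l (B.map (Int.cast : ℤ → ℚ) *ᵥ w) = colPairing S B l ⬝ᵥ w := by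
  rw [bilinQ_eq_dotProduct, dotProduct_mulVec, dotProduct_mulVec, colPairing]

lemma bilinC_ofRat_mulVec_right (S : Matrix ι ι ℤ) (B : Matrix ι κ ℤ) (l : ι → ℚ) (z : κ → ℂ) :
    bilinC S (fun i => (l i : ℂ)) (B.map (Int.cast : ℤ → ℂ) *ᵥ z)
      = ∑ a, (colPairing S B l a : ℂ) * z a := by
  rw [bilinC_eq_dotProduct, dotProduct_mulVec, dotProduct_mulVec, dotProduct]
  congr 1 with a
  simp [colPairing, vecMul, dotProduct]

lemma colPairing_mulVec (S : Matrix ι ι ℤ) (B : Matrix ι κ ℤ) (q : κ → ℚ) :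
    colPairing S B (B.map (Int.cast : ℤ → ℚ) *ᵥ q) = colPairing (Bᵀ * S * B) 1 q := by
  have hmap : (Bᵀ * S * B).map (Int.castRingHom ℚ)
      = (B.map (Int.castRingHom ℚ))ᵀ * S.map (Int.castRingHom ℚ) * B.map (Int.castRingHom ℚ) := by
    rw [Matrix.map_mul, Matrix.map_mul, transpose_map]
  simp only [colPairing, ← vecMul_transpose, vecMul_vecMul,
    Matrix.map_one _ Int.cast_zero Int.cast_one, mul_one]
  exact congrArg (q ᵥ* ·) hmap.symm

lemma bilinC_ofRat_left (S : Matrix κ κ ℤ) (q : κ → ℚ) (z : κ → ℂ) :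
    bilinC S (fun a => (q a : ℂ)) z = ∑ a, (colPairing S 1 q a : ℂ) * z a := by
  simpa using bilinC_ofRat_mulVec_right S 1 q z

lemma bilinQ_mulVec_mulVec (S : Matrix ι ι ℤ) (B : Matrix ι κ ℤ) (x y : κ → ℚ) :
    bilinQ S (B.map (Int.cast : ℤ → ℚ) *ᵥ x) (B.map (Int.cast : ℤ → ℚ) *ᵥ y)
      = bilinQ (Bᵀ * S * B) x y := by
  rw [bilinQ_mulVec_right, colPairing_mulVec, ← bilinQ_mulVec_right]
  simp

end Bilinear

section Sublattice

variable {ι κ : Type*} [Fintype ι] [Fintype κ] {S : Matrix ι ι ℤ} {B : Matrix ι κ ℤ}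

lemma colPairing_eq_zero_of_forall_bilinQ_eq_zero {l : ι → ℚ}
    (h : ∀ w, bilinQ S l (B.map (Int.cast : ℤ → ℚ) *ᵥ w) = 0) : colPairing S B l = 0 := by
  ext a
  have := h (Pi.single a 1)
  rwa [bilinQ_mulVec_right, dotProduct_single, mul_one] at this

lemma colPairing_mulVec_injective (hpos : ∀ x : ι → ℚ, x ≠ 0 → 0 < bilinQ S x x)
    (hinj : Function.Injective (B.map (Int.cast : ℤ → ℚ) *ᵥ ·)) :
    Function.Injective fun q => colPairing S B (B.map (Int.cast : ℤ → ℚ) *ᵥ q) := by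
  intro q₁ q₂ h
  have hd : colPairing S B (B.map (Int.cast : ℤ → ℚ) *ᵥ (q₁ - q₂)) = 0 := by
    rw [mulVec_sub, colPairing_sub, sub_eq_zero]
    exact h
  have hBd : B.map (Int.cast : ℤ → ℚ) *ᵥ (q₁ - q₂) = 0 := by
    by_contra hne
    have := hpos _ hne
    rw [bilinQ_mulVec_right, hd, zero_dotProduct] at this
    exact this.false
  exact sub_eq_zero.mp (hinj (hBd.trans (mulVec_zero _).symm))

lemma bilinQ_self_eq_add_of_orthogonal (hsymm : S.IsSymm)
    (hpos : ∀ x : ι → ℚ, x ≠ 0 → 0 < bilinQ S x x)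
    (hinj : Function.Injective (B.map (Int.cast : ℤ → ℚ) *ᵥ ·)) {l lperp : ι → ℚ} {w q : κ → ℚ}
    (hdecomp : l - lperp = B.map (Int.cast : ℤ → ℚ) *ᵥ w)
    (horth : ∀ w, bilinQ S lperp (B.map (Int.cast : ℤ → ℚ) *ᵥ w) = 0)
    (hpair : colPairing S B l = colPairing S B (B.map (Int.cast : ℤ → ℚ) *ᵥ q)) :
    bilinQ S l l = bilinQ (Bᵀ * S * B) q q + bilinQ S lperp lperp := by
  have hwq : w = q := colPairing_mulVec_injective hpos hinj <| by
    dsimp only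
    rw [← hdecomp, colPairing_sub, colPairing_eq_zero_of_forall_bilinQ_eq_zero horth, sub_zero,
      hpair]
  have hl : l = B.map (Int.cast : ℤ → ℚ) *ᵥ q + lperp := by
    rw [← hwq, ← hdecomp, sub_add_cancel]
  rw [hl, bilinQ_add_left, bilinQ_add_right, bilinQ_add_right, bilinQ_comm hsymm _ lperp, horth q,
    bilinQ_mulVec_mulVec]
  ring

end Sublattice

def HasFourierExpansion {ι : Type*} [Fintype ι] (S : Matrix ι ι ℤ) (f : ℚ × (ι → ℚ) → ℂ)
    (φ : ℂ → (ι → ℂ) → ℂ) : Prop :=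
  ∀ τ : ℂ, 0 < τ.im → ∀ z : ι → ℂ,
    HasSum (fun p : ℚ × (ι → ℚ) =>
        f p * Complex.exp (2 * (π : ℂ) * I *
          ((p.1 : ℂ) * τ + bilinC S (fun i => (p.2 i : ℂ)) z))) (φ τ z)

lemma cexp_two_pi_I_mul_add_I {κ : Type*} [Fintype κ] (n : ℚ) (c : κ → ℚ) (x : Option κ → ℝ) :
    cexp (2 * π * I * ((n : ℂ) * (x none + I) + ∑ a, (c a : ℂ) * x (some a)))
      = cexp (-(2 * π * n)) * cexp (2 * π * I *
          ∑ o, ((o.elim n c : ℚ) : ℂ) * x o) := by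
  rw [← Complex.exp_add, Fintype.sum_option]
  congr 1
  simp only [Option.elim_none, Option.elim_some]
  ring_nf
  rw [Complex.I_sq]
  ring

lemma exists_coeff_of_pullback_coeff_ne_zero {ι κ : Type*} [Fintype ι] [Fintype κ]
    {S : Matrix ι ι ℤ} {B : Matrix ι κ ℤ} {f : ℚ × (ι → ℚ) → ℂ} {φ : ℂ → (ι → ℂ) → ℂ}
    {g : ℚ × (κ → ℚ) → ℂ} (hf : HasFourierExpansion S f φ)
    (hg : HasFourierExpansion (Bᵀ * S * B) g (fun τ w => φ τ (B.map (Int.cast : ℤ → ℂ) *ᵥ w)))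
    (hMinj : Function.Injective fun q => colPairing S B (B.map (Int.cast : ℤ → ℚ) *ᵥ q))
    {q : ℚ × (κ → ℚ)} (hq : g q ≠ 0) :
    ∃ p, f p ≠ 0 ∧ p.1 = q.1 ∧
      colPairing S B p.2 = colPairing S B (B.map (Int.cast : ℤ → ℚ) *ᵥ q.2) := by
  set freq : (ℚ × (ι → ℚ)) ⊕ (ℚ × (κ → ℚ)) → ℚ × (κ → ℚ) :=
    Sum.elim (fun p => (p.1, colPairing S B p.2))
      (fun q => (q.1, colPairing S B (B.map (Int.cast : ℤ → ℚ) *ᵥ q.2)))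
  set a : (ℚ × (ι → ℚ)) ⊕ (ℚ × (κ → ℚ)) → ℂ :=
    Sum.elim (fun p => f p * cexp (-(2 * π * p.1))) (fun q => -(g q * cexp (-(2 * π * q.1))))
  -- the difference of the two expansions of `φ|_M` at `τ = x none + I`, `w = x ∘ some`;
  -- the factors `e^{-2πn}` come from `Im τ = 1`
  have hsum : ∀ x : Option κ → ℝ, HasSum (fun j => a j * cexp (2 * π * I *
      ∑ o, ((o.elim (freq j).1 (freq j).2 : ℚ) : ℂ) * x o)) 0 := by
    intro x
    have hτ : 0 < ((x none : ℂ) + I).im := by simp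
    have hL := hf _ hτ (B.map (Int.cast : ℤ → ℂ) *ᵥ fun a => (x (some a) : ℂ))
    have hR := (hg _ hτ fun a => (x (some a) : ℂ)).neg
    rw [← add_neg_cancel (φ _ _)]
    refine HasSum.sum ?_ ?_
    · refine hL.congr_fun fun p => ?_
      rw [bilinC_ofRat_mulVec_right, cexp_two_pi_I_mul_add_I, ← mul_assoc]
      rfl
    · refine hR.congr_fun fun q => ?_
      rw [bilinC_ofRat_left, ← colPairing_mulVec, cexp_two_pi_I_mul_add_I, ← mul_assoc, ← neg_mul]
      rfl
  have hfiber := tsum_subtype_eq_zero_of_hasSum_cexp_sum hsum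
    fun o => o.elim (freq (.inr q)).1 (freq (.inr q)).2
  have hfreq : ∀ {j j'}, (fun o : Option κ => o.elim (freq j).1 (freq j).2)
      = (fun o => o.elim (freq j').1 (freq j').2) → freq j = freq j' := fun h =>
    Prod.ext (congrFun h none) (funext fun a => congrFun h (some a))
  by_contra! hnone
  rw [tsum_eq_single ⟨.inr q, rfl⟩] at hfiber
  · exact hq (by simpa [a] using hfiber)
  rintro ⟨p | q', hj⟩ hne
  · obtain ⟨h1, h2⟩ := Prod.mk.inj (hfreq hj)
    have : f p = 0 := by_contra fun hp => hnone p hp h1 h2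
    simp [a, this]
  · obtain ⟨h1, h2⟩ := Prod.mk.inj (hfreq hj)
    have hq' : q' = q := Prod.ext h1 (hMinj h2)
    exact absurd (Subtype.ext (congrArg Sum.inr hq')) hne

theorem statement11_general {ι : Type*} [Fintype ι]
    (S : Matrix ι ι ℤ) (hS : IsEvenPosDef S)
    (mr : ℕ)
    (B : Matrix ι (Fin mr) ℤ)
    (hinj : Function.Injective fun w : Fin mr → ℚ => (B.map (Int.cast : ℤ → ℚ)).mulVec w)
    (k t : ℚ)
    (χ : SL2Z → ℂ)
    (ν : (ι → ℤ) → (ι → ℤ) → ℂ)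
    (f : ℚ × (ι → ℚ) → ℂ) (φ : ℂ → (ι → ℂ) → ℂ)
    (hφ : IsJacobiForm S k t χ ν f φ)
    -- `lperp p` is the orthogonal projection of the Fourier index `p.2` onto `M^⊥ ⊗ ℚ`:
    (lperp : ℚ × (ι → ℚ) → ι → ℚ)
    (hlperp : ∀ p, f p ≠ 0 →
      (∃ w : Fin mr → ℚ, (fun i => p.2 i - lperp p i) = (B.map (Int.cast : ℤ → ℚ)).mulVec w) ∧
      (∀ w : Fin mr → ℚ, bilinQ S (lperp p) ((B.map (Int.cast : ℤ → ℚ)).mulVec w) = 0)) :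
    ((∃ (τ : ℂ) (w : Fin mr → ℂ), 0 < τ.im ∧
        φ τ ((B.map (Int.cast : ℤ → ℂ)).mulVec w) ≠ 0) →
      ∀ c : ℚ, (∀ p, f p ≠ 0 → c ≤ bilinQ S (lperp p) (lperp p)) →
      ∀ g : ℚ × (Fin mr → ℚ) → ℂ,
        IsJacobiForm (B.transpose * S * B) k t χ
          (fun x y => ν (B.mulVec x) (B.mulVec y)) g
          (fun τ w => φ τ ((B.map (Int.cast : ℤ → ℂ)).mulVec w)) →
        ∀ q, g q ≠ 0 →
          c ≤ 2 * q.1 * t - bilinQ (B.transpose * S * B) q.2 q.2) ∧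
    ((∀ p, f p ≠ 0 → lperp p ≠ 0) →
      ∀ g : ℚ × (Fin mr → ℚ) → ℂ,
        IsJacobiForm (B.transpose * S * B) k t χ
          (fun x y => ν (B.mulVec x) (B.mulVec y)) g
          (fun τ w => φ τ ((B.map (Int.cast : ℤ → ℂ)).mulVec w)) →
        IsCuspSupport (B.transpose * S * B) t g) := by
  have key : ∀ g : ℚ × (Fin mr → ℚ) → ℂ,
      IsJacobiForm (B.transpose * S * B) k t χ (fun x y => ν (B.mulVec x) (B.mulVec y)) g
        (fun τ w => φ τ ((B.map (Int.cast : ℤ → ℂ)).mulVec w)) →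
      ∀ q, g q ≠ 0 → ∃ p, f p ≠ 0 ∧ 2 * q.1 * t - bilinQ (B.transpose * S * B) q.2 q.2
        = 2 * p.1 * t - bilinQ S p.2 p.2 + bilinQ S (lperp p) (lperp p) := by
    intro g hg q hq
    obtain ⟨p, hfp, hp1, hpair⟩ := exists_coeff_of_pullback_coeff_ne_zero hφ.expansion
      hg.expansion (colPairing_mulVec_injective hS.posdef hinj) hq
    obtain ⟨⟨w, hw⟩, horth⟩ := hlperp p hfp
    refine ⟨p, hfp, ?_⟩
    rw [bilinQ_self_eq_add_of_orthogonal hS.symm hS.posdef hinj hw horth hpair, hp1]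
    ring
  refine ⟨fun _ c hc g hg q hq => ?_, fun hl g hg q hq => ?_⟩
  · obtain ⟨p, hfp, heq⟩ := key g hg q hq
    linarith [(hφ.support p hfp).2.2, hc p hfp]
  · obtain ⟨p, hfp, heq⟩ := key g hg q hq
    linarith [(hφ.support p hfp).2.2, hS.posdef _ (hl p hfp)]

/-- Order estimate for pullbacks: if the pullback `φ|_M` is not identically
zero, then its order at infinity is bounded below by any lower bound of the norms `(l_⊥,l_⊥)`
of the `M^⊥`-projections of the Fourier support of `φ`; in particular if `l_⊥ ≠ 0` on all of
the support, every Fourier expansion of `φ|_M` has cusp support. -/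
theorem statement11 {ι : Type*} [Fintype ι] [DecidableEq ι]
    (S : Matrix ι ι ℤ) (hS : IsEvenPosDef S)
    (mr : ℕ) (hmr : 0 < mr) (hrank : mr < Fintype.card ι)
    (B : Matrix ι (Fin mr) ℤ)
    (hinj : Function.Injective fun w : Fin mr → ℚ => (B.map (Int.cast : ℤ → ℚ)).mulVec w)
    (k t : ℚ) (ht : 0 < t)
    (χ : SL2Z → ℂ) (hχ : ∀ A, HasFiniteOrder (χ A))
    (ν : (ι → ℤ) → (ι → ℤ) → ℂ) (hν : ∀ x y, HasFiniteOrder (ν x y))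
    (f : ℚ × (ι → ℚ) → ℂ) (φ : ℂ → (ι → ℂ) → ℂ)
    (hφ : IsJacobiForm S k t χ ν f φ)
    -- `lperp p` is the orthogonal projection of the Fourier index `p.2` onto `M^⊥ ⊗ ℚ`:
    (lperp : ℚ × (ι → ℚ) → ι → ℚ)
    (hlperp : ∀ p, f p ≠ 0 →
      (∃ w : Fin mr → ℚ, (fun i => p.2 i - lperp p i) = (B.map (Int.cast : ℤ → ℚ)).mulVec w) ∧
      (∀ w : Fin mr → ℚ, bilinQ S (lperp p) ((B.map (Int.cast : ℤ → ℚ)).mulVec w) = 0)) :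
    ((∃ (τ : ℂ) (w : Fin mr → ℂ), 0 < τ.im ∧
        φ τ ((B.map (Int.cast : ℤ → ℂ)).mulVec w) ≠ 0) →
      ∀ c : ℚ, (∀ p, f p ≠ 0 → c ≤ bilinQ S (lperp p) (lperp p)) →
      ∀ g : ℚ × (Fin mr → ℚ) → ℂ,
        IsJacobiForm (B.transpose * S * B) k t χ
          (fun x y => ν (B.mulVec x) (B.mulVec y)) g
          (fun τ w => φ τ ((B.map (Int.cast : ℤ → ℂ)).mulVec w)) →
        ∀ q, g q ≠ 0 →
          c ≤ 2 * q.1 * t - bilinQ (B.transpose * S * B) q.2 q.2) ∧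
    ((∀ p, f p ≠ 0 → lperp p ≠ 0) →
      ∀ g : ℚ × (Fin mr → ℚ) → ℂ,
        IsJacobiForm (B.transpose * S * B) k t χ
          (fun x y => ν (B.mulVec x) (B.mulVec y)) g
          (fun τ w => φ τ ((B.map (Int.cast : ℤ → ℂ)).mulVec w)) →
        IsCuspSupport (B.transpose * S * B) t g) :=
  statement11_general S hS mr B hinj k t χ ν f φ hφ lperp hlperp
end
end

section
/- Let m ≥ 2 and let b₁,…,b_m be integers such that at least two of the b_i are nonzero, gcd(b₁,…,b_m) = 1, and b₁+⋯+b_m is odd. Then there exist odd integers c₁,…,c_m with c₁b₁ + c₂b₂ + ⋯ + c_m b_m = 1. -/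
open scoped BigOperators

/-- With `∑ bᵢ = 2k + 1`, the witness is `cᵢ = 1 - 2k aᵢ`. -/
theorem exists_odd_coeffs_of_sum_mul_eq_one {ι : Type*} (s : Finset ι) (a b : ι → ℤ)
    (hab : ∑ i ∈ s, b i * a i = 1) (hodd : Odd (∑ i ∈ s, b i)) :
    ∃ c : ι → ℤ, (∀ i, Odd (c i)) ∧ ∑ i ∈ s, c i * b i = 1 := by
  obtain ⟨k, hk⟩ := hodd
  refine ⟨fun i => 1 - 2 * k * a i, fun i => ⟨-(k * a i), by ring⟩, ?_⟩
  calc ∑ i ∈ s, (1 - 2 * k * a i) * b i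
      = ∑ i ∈ s, b i - 2 * k * ∑ i ∈ s, b i * a i := by
        rw [Finset.mul_sum, ← Finset.sum_sub_distrib]
        exact Finset.sum_congr rfl fun i _ => by ring
    _ = 1 := by rw [hk, hab]; ring

theorem statement12_general (m : ℕ) (b : Fin m → ℤ)
    (hgcd : Finset.univ.gcd b = 1)
    (hodd : Odd (∑ i, b i)) :
    ∃ c : Fin m → ℤ, (∀ i, Odd (c i)) ∧ ∑ i, c i * b i = 1 := by
  obtain ⟨a, hab⟩ := Finset.univ.gcd_eq_sum_mul b
  rw [hgcd] at hab
  exact exists_odd_coeffs_of_sum_mul_eq_one Finset.univ a b hab.symm hodd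

/-- If `b₁,…,b_m` are integers, at least two of which are nonzero, with
`gcd(b₁,…,b_m) = 1` and `b₁+⋯+b_m` odd, then `1` can be represented as `∑ cᵢ bᵢ` with all
coefficients `cᵢ` odd. -/
theorem statement12 (m : ℕ) (hm : 2 ≤ m) (b : Fin m → ℤ)
    (h2 : ∃ i j : Fin m, i ≠ j ∧ b i ≠ 0 ∧ b j ≠ 0)
    (hgcd : Finset.univ.gcd b = 1)
    (hodd : Odd (∑ i, b i)) :
    ∃ c : Fin m → ℤ, (∀ i, Odd (c i)) ∧ ∑ i, c i * b i = 1 :=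
  statement12_general m b hgcd hodd
end
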